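/- arXiv:1603.09187 — 5 statements merged into one kernel-verified Lean document; each statement's English description precedes it below -/
import Mathlib

section
/- Let G be a critical graph with chromatic number k+1 for an integer k ≥ 0. Then no separating vertex set of G is a clique of G. In particular, G is connected and has no separating vertex. -/
/-! If a clique `S` separated `G`, then for every component `C` of `G - S` the graph induced on
`S ∪ C` is a proper subgraph, hence `k`-colorable by criticality. A coloring is injective on the
clique `S`, so after permuting colors these colorings all agree on `S` and glue to a `k`-coloring
of `G`, contradicting `χ(G) = k + 1`. Connectedness is the case `S = ∅`, and a cut vertex is a
separating clique of size one. -/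

open SimpleGraph

/-- There exist `n` pairwise edge-disjoint `u`-`v` paths in `G`. -/
def HasEdgeDisjointPaths {V : Type} (G : SimpleGraph V) (u v : V) (n : ℕ) : Prop :=
  ∃ P : Fin n → G.Walk u v, (∀ i, (P i).IsPath) ∧
    ∀ i j, i ≠ j → ∀ e, e ∈ (P i).edges → e ∉ (P j).edges

/-- The local edge connectivity `λ_G(u,v)`: the maximum number of pairwise
edge-disjoint `u`-`v` paths in `G`. -/
noncomputable def localEdgeConn {V : Type} (G : SimpleGraph V) (u v : V) : ℕ :=
  sSup {n | HasEdgeDisjointPaths G u v n}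

/-- The maximum local edge connectivity `λ(G)` (equal to `0` if `G` has at most
one vertex). -/
noncomputable def maxLocalEdgeConn {V : Type} (G : SimpleGraph V) : ℕ :=
  sSup {n | ∃ u v : V, u ≠ v ∧ n = localEdgeConn G u v}

/-- There exist `n` internally vertex-disjoint `u`-`v` paths in `G`. -/
def HasInternallyDisjointPaths {V : Type} (G : SimpleGraph V) (u v : V) (n : ℕ) : Prop :=
  ∃ P : Fin n → G.Walk u v, (∀ i, (P i).IsPath) ∧
    ∀ i j, i ≠ j → ∀ x, x ∈ (P i).support → x ∈ (P j).support → x = u ∨ x = v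

/-- The local connectivity `κ_G(u,v)`. -/
noncomputable def localConn {V : Type} (G : SimpleGraph V) (u v : V) : ℕ :=
  sSup {n | HasInternallyDisjointPaths G u v n}

/-- The maximum local connectivity `κ(G)`. -/
noncomputable def maxLocalConn {V : Type} (G : SimpleGraph V) : ℕ :=
  sSup {n | ∃ u v : V, u ≠ v ∧ n = localConn G u v}

/-- A graph is critical if every proper subgraph has a smaller chromatic number. -/
def IsCritical {V : Type} (G : SimpleGraph V) : Prop :=
  ∀ H : G.Subgraph, H ≠ ⊤ → H.coe.chromaticNumber < G.chromaticNumber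

/-- The number of connected components of `G`. -/
noncomputable def numComponents {V : Type} (G : SimpleGraph V) : ℕ :=
  Nat.card G.ConnectedComponent

/-- `S` is a separating vertex set of `G`: deleting `S` increases the number of
connected components. -/
def IsSepVertexSet {V : Type} (G : SimpleGraph V) (S : Set V) : Prop :=
  numComponents G < numComponents (G.induce Sᶜ)

/-- `F` is a separating edge set of `G`. -/
def IsSepEdgeSet {V : Type} (G : SimpleGraph V) (F : Set (Sym2 V)) : Prop :=
  numComponents G < numComponents (G.deleteEdges F)

/-- `G` has no separating vertex (cut vertex). -/
def HasNoCutVertex {V : Type} (G : SimpleGraph V) : Prop :=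
  ∀ v : V, ¬ IsSepVertexSet G {v}

/-- `B` is a block of `G`: a maximal connected subgraph of `G` without a cut vertex. -/
def IsBlock {V : Type} (G : SimpleGraph V) (B : G.Subgraph) : Prop :=
  B.coe.Connected ∧ HasNoCutVertex B.coe ∧
    ∀ B' : G.Subgraph, B ≤ B' → B'.coe.Connected → HasNoCutVertex B'.coe → B' = B

/-- `G` is a complete graph of order `n`. -/
def IsCompleteOfOrder {V : Type} (G : SimpleGraph V) (n : ℕ) : Prop :=
  Nat.card V = n ∧ ∀ v w : V, v ≠ w → G.Adj v w

/-- The cycle on `ZMod n`. -/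
def cycleGraphZ (n : ℕ) : SimpleGraph (ZMod n) :=
  SimpleGraph.fromRel (fun a b => b = a + 1)

/-- `G` is an odd cycle. -/
def IsOddCycle {V : Type} (G : SimpleGraph V) : Prop :=
  ∃ n : ℕ, Odd n ∧ 3 ≤ n ∧ Nonempty (G ≃g cycleGraphZ n)

/-- The wheel: a cycle of length `n` together with a hub joined to all its vertices. -/
def wheelGraph (n : ℕ) : SimpleGraph (Option (ZMod n)) :=
  SimpleGraph.fromRel (fun a b =>
    (a = none ∧ b ≠ none) ∨ ∃ x y, a = some x ∧ b = some y ∧ (cycleGraphZ n).Adj x y)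

/-- `G` is an odd wheel. -/
def IsOddWheel {V : Type} (G : SimpleGraph V) : Prop :=
  ∃ n : ℕ, Odd n ∧ 3 ≤ n ∧ Nonempty (G ≃g wheelGraph n)

/-- The Hajós join of `G₁` (with edge `v₁w₁`) and `G₂` (with edge `v₂w₂`):
delete the two edges, identify `v₁` with `v₂`, and add the edge `w₁w₂`. -/
def hajosJoin {V₁ V₂ : Type} (G₁ : SimpleGraph V₁) (G₂ : SimpleGraph V₂)
    (v₁ w₁ : V₁) (v₂ w₂ : V₂) : SimpleGraph {x : V₁ ⊕ V₂ // x ≠ Sum.inr v₂} :=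
  SimpleGraph.fromRel (fun a b =>
    (∃ x y : V₁, a.1 = Sum.inl x ∧ b.1 = Sum.inl y ∧ G₁.Adj x y ∧
        ¬(x = v₁ ∧ y = w₁) ∧ ¬(x = w₁ ∧ y = v₁)) ∨
    (∃ x y : V₂, a.1 = Sum.inr x ∧ b.1 = Sum.inr y ∧ G₂.Adj x y) ∨
    (∃ y : V₂, a.1 = Sum.inl v₁ ∧ b.1 = Sum.inr y ∧ G₂.Adj v₂ y ∧ y ≠ w₂) ∨
    (a.1 = Sum.inl w₁ ∧ b.1 = Sum.inr w₂))

/-- `G` is (isomorphic to) a Hajós join of `G₁` and `G₂`. -/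
def IsHajosJoin {V V₁ V₂ : Type} (G : SimpleGraph V) (G₁ : SimpleGraph V₁)
    (G₂ : SimpleGraph V₂) : Prop :=
  ∃ (v₁ w₁ : V₁) (v₂ w₂ : V₂), G₁.Adj v₁ w₁ ∧ G₂.Adj v₂ w₂ ∧
    Nonempty (G ≃g hajosJoin G₁ G₂ v₁ w₁ v₂ w₂)

/-- The class `ℋ_k`: for `k ≠ 2, 3` it contains the complete graphs of order
`k+1`; `ℋ₂` consists of the odd cycles; `ℋ₃` contains the odd wheels; and for
`k ≥ 3` the class is closed under Hajós joins. -/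
inductive HajosClass : (k : ℕ) → {V : Type} → SimpleGraph V → Prop where
  | complete {k : ℕ} {V : Type} (G : SimpleGraph V) (h2 : k ≠ 2) (h3 : k ≠ 3)
      (h : IsCompleteOfOrder G (k + 1)) : HajosClass k G
  | oddCycle {V : Type} (G : SimpleGraph V) (h : IsOddCycle G) : HajosClass 2 G
  | oddWheel {V : Type} (G : SimpleGraph V) (h : IsOddWheel G) : HajosClass 3 G
  | join {k : ℕ} (hk : 3 ≤ k) {V V₁ V₂ : Type} (G : SimpleGraph V)
      (G₁ : SimpleGraph V₁) (G₂ : SimpleGraph V₂)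
      (h₁ : HajosClass k G₁) (h₂ : HajosClass k G₂) (h : IsHajosJoin G G₁ G₂) :
      HajosClass k G

/-- The class `𝒞_k`: critical graphs with chromatic number `k+1` and maximum
local edge connectivity at most `k`. -/
def InCk {V : Type} (G : SimpleGraph V) (k : ℕ) : Prop :=
  IsCritical G ∧ G.chromaticNumber = (k + 1 : ℕ) ∧ maxLocalEdgeConn G ≤ k

/-- Minimum degree (0 for the empty graph). -/
noncomputable def minDeg {V : Type} [Fintype V] (G : SimpleGraph V) : ℕ :=
  letI := Classical.decEq V
  letI : DecidableRel G.Adj := Classical.decRel _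
  G.minDegree

/-- Maximum degree (0 for the empty graph). -/
noncomputable def maxDeg {V : Type} [Fintype V] (G : SimpleGraph V) : ℕ :=
  letI := Classical.decEq V
  letI : DecidableRel G.Adj := Classical.decRel _
  G.maxDegree

/-- The minimum degree of a subgraph of `G`. -/
noncomputable def subgraphMinDeg {V : Type} [Fintype V] {G : SimpleGraph V}
    (H : G.Subgraph) : ℕ :=
  letI : Fintype H.verts := (Set.toFinite H.verts).fintype
  minDeg H.coe

/-- The coloring number `col(G) = 1 + max {δ(H) : H ⊆ G}`. -/
noncomputable def coloringNumber {V : Type} [Fintype V] (G : SimpleGraph V) : ℕ :=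
  1 + sSup (Set.range (subgraphMinDeg (G := G)))

/-- `∂_G(X)`: the set of edges of `G` with exactly one end in `X`. -/
def edgeBoundary {V : Type} (G : SimpleGraph V) (X : Set V) : Set (Sym2 V) :=
  {e | e ∈ G.edgeSet ∧ ∃ x y : V, e = s(x, y) ∧ x ∈ X ∧ y ∉ X}

/-- The vertices of `X` incident with some edge of `F`. -/
def cutVerts {V : Type} (F : Set (Sym2 V)) (X : Set V) : Set V :=
  {x ∈ X | ∃ e ∈ F, x ∈ e}

/-- The graph obtained from `G` by identifying the vertices `v` and `w`. -/
def identifyVerts {V : Type} (G : SimpleGraph V) (v w : V) :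
    SimpleGraph {x : V // x ≠ w} :=
  SimpleGraph.fromRel (fun a b =>
    G.Adj a.1 b.1 ∨ (a.1 = v ∧ G.Adj w b.1) ∨ (b.1 = v ∧ G.Adj w a.1))

/-- The graph obtained from `H` by adding a new vertex joined to all vertices of `T`. -/
def addVertexJoined {W : Type} (H : SimpleGraph W) (T : Set W) : SimpleGraph (Option W) :=
  SimpleGraph.fromRel (fun a b =>
    (∃ x y : W, a = some x ∧ b = some y ∧ H.Adj x y) ∨
    (a = none ∧ ∃ y ∈ T, b = some y))

/-- `G` is 3-connected: more than 3 vertices and connected after deleting any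
set of fewer than 3 vertices. -/
def IsThreeConnected {V : Type} (G : SimpleGraph V) : Prop :=
  3 < Nat.card V ∧ ∀ S : Set V, S.ncard < 3 → (G.induce Sᶜ).Connected

namespace SimpleGraph

variable {V : Type*} {G : SimpleGraph V} {S : Set V}

def sepComponent (C : (G.induce Sᶜ).ConnectedComponent) : Set V :=
  S ∪ Subtype.val '' C.supp

section sepComponent

variable {C D : (G.induce Sᶜ).ConnectedComponent} {u v : V}

lemma mem_sepComponent_of_mem (hv : v ∈ S) : v ∈ sepComponent C :=
  Or.inl hv

lemma mem_sepComponent_connectedComponentMk (hv : v ∉ S) :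
    v ∈ sepComponent ((G.induce Sᶜ).connectedComponentMk ⟨v, hv⟩) :=
  Or.inr ⟨⟨v, hv⟩, rfl, rfl⟩

lemma connectedComponentMk_eq_of_mem_sepComponent (hv : v ∉ S) (h : v ∈ sepComponent C) :
    (G.induce Sᶜ).connectedComponentMk ⟨v, hv⟩ = C := by
  obtain h | ⟨w, hw, rfl⟩ := h
  · exact absurd h hv
  · exact hw

lemma sepComponent_ne_univ (hCD : C ≠ D) : sepComponent C ≠ Set.univ := by
  intro h
  obtain ⟨w, rfl⟩ := D.nonempty_supp
  have hw : w.1 ∈ sepComponent C := h ▸ Set.mem_univ _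
  exact hCD (connectedComponentMk_eq_of_mem_sepComponent w.2 hw).symm

lemma exists_sepComponent_mem_of_adj (hSc : Sᶜ.Nonempty) (huv : G.Adj u v) :
    ∃ C : (G.induce Sᶜ).ConnectedComponent, u ∈ sepComponent C ∧ v ∈ sepComponent C := by
  by_cases hu : u ∈ S
  · by_cases hv : v ∈ S
    · exact ⟨(G.induce Sᶜ).connectedComponentMk ⟨_, hSc.some_mem⟩,
        mem_sepComponent_of_mem hu, mem_sepComponent_of_mem hv⟩
    · exact ⟨_, mem_sepComponent_of_mem hu, mem_sepComponent_connectedComponentMk hv⟩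
  · refine ⟨_, mem_sepComponent_connectedComponentMk hu, ?_⟩
    by_cases hv : v ∈ S
    · exact mem_sepComponent_of_mem hv
    · have hadj : (G.induce Sᶜ).Adj ⟨v, hv⟩ ⟨u, hu⟩ := huv.symm
      rw [← ConnectedComponent.sound hadj.reachable]
      exact mem_sepComponent_connectedComponentMk hv

end sepComponent

theorem IsClique.colorable_of_colorable_induce_sepComponent {n : ℕ} (hS : G.IsClique S)
    (hSc : Sᶜ.Nonempty)
    (h : ∀ C : (G.induce Sᶜ).ConnectedComponent, (G.induce (sepComponent C)).Colorable n) :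
    G.Colorable n := by
  classical
  let f C := (h C).some
  let restrict C : S → Fin n := f C ∘ fun s => ⟨s, mem_sepComponent_of_mem s.2⟩
  have restrict_injective C : Function.Injective (restrict C) :=
    (f C).injective_comp_of_pairwise_adj _ fun s t hst => hS s.2 t.2 (Subtype.coe_ne_coe.mpr hst)
  let C₀ := (G.induce Sᶜ).connectedComponentMk ⟨_, hSc.some_mem⟩
  have : Finite S := Finite.of_injective _ (restrict_injective C₀)
  choose σ hσ using fun C =>
    Equiv.Perm.exists_extending_pair _ _ (restrict_injective C) (restrict_injective C₀)
  let g C (v : sepComponent C) : Fin n := σ C (f C v)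
  let col (v : V) : Fin n :=
    if hv : v ∈ S then restrict C₀ ⟨v, hv⟩ else g _ ⟨v, mem_sepComponent_connectedComponentMk hv⟩
  have col_eq C v (hv : v ∈ sepComponent C) : col v = g C ⟨v, hv⟩ := by
    by_cases hvS : v ∈ S
    · simp only [col, dif_pos hvS]
      exact (hσ C ⟨v, hvS⟩).symm
    · obtain rfl := connectedComponentMk_eq_of_mem_sepComponent hvS hv
      simp only [col, dif_neg hvS]
  refine ⟨Coloring.mk col fun {u v} huv => ?_⟩
  obtain ⟨C, hu, hv⟩ := exists_sepComponent_mem_of_adj hSc huv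
  rw [col_eq C u hu, col_eq C v hv]
  exact (σ C).injective.ne ((f C).valid huv)

end SimpleGraph

section Critical

variable {V : Type} {G : SimpleGraph V} {k : ℕ}

lemma IsCritical.colorable_induce_of_ne_univ (hcrit : IsCritical G)
    (hchi : G.chromaticNumber = (k + 1 : ℕ)) {A : Set V} (hA : A ≠ Set.univ) :
    (G.induce A).Colorable k := by
  have hlt := hcrit ((⊤ : G.Subgraph).induce A) fun h => hA (congrArg Subgraph.verts h)
  rw [← induce_eq_coe_induce_top, hchi, Nat.cast_succ, ENat.lt_natCast_add_one_iff] at hlt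
  exact chromaticNumber_le_iff_colorable.mp hlt

theorem IsCritical.preconnected_induce_compl_of_isClique (hcrit : IsCritical G)
    (hchi : G.chromaticNumber = (k + 1 : ℕ)) {S : Set V} (hS : G.IsClique S) :
    (G.induce Sᶜ).Preconnected := by
  intro u v
  by_contra huv
  have : Nontrivial (G.induce Sᶜ).ConnectedComponent :=
    ⟨_, _, fun h => huv (ConnectedComponent.exact h)⟩
  have hcol : G.Colorable k := hS.colorable_of_colorable_induce_sepComponent ⟨u, u.2⟩ fun C =>
    hcrit.colorable_induce_of_ne_univ hchi (sepComponent_ne_univ (exists_ne C).choose_spec.symm)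
  have := hcol.chromaticNumber_le
  rw [hchi, Nat.cast_le] at this
  omega

end Critical

lemma IsSepVertexSet.not_preconnected_induce_compl {V : Type} [Finite V] [Nonempty V]
    {G : SimpleGraph V} {S : Set V} (h : IsSepVertexSet G S) : ¬ (G.induce Sᶜ).Preconnected :=
  fun hpre => by
    have := hpre.subsingleton_connectedComponent
    have h₁ : numComponents (G.induce Sᶜ) ≤ 1 := Finite.card_le_one_iff_subsingleton.mpr this
    have h₂ : 0 < numComponents G := Nat.card_pos
    unfold IsSepVertexSet at h
    omega

/-- In a critical graph with chromatic number `k+1`, no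
separating vertex set is a clique; in particular the graph is connected and has
no separating vertex. -/
theorem critical_no_clique_separator {V : Type} [Fintype V] (G : SimpleGraph V) (k : ℕ)
    (hcrit : IsCritical G) (hchi : G.chromaticNumber = (↑(k + 1) : ℕ∞)) :
    (∀ S : Set V, IsSepVertexSet G S → ¬ G.IsClique S) ∧
    G.Connected ∧ HasNoCutVertex G := by
  have : Nonempty V := not_isEmpty_iff.mp fun h => by
    rw [chromaticNumber_eq_zero_iff.mpr h] at hchi
    exact absurd hchi (by norm_cast)
  have no_clique_sep S (hsep : IsSepVertexSet G S) (hS : G.IsClique S) : False :=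
    hsep.not_preconnected_induce_compl (hcrit.preconnected_induce_compl_of_isClique hchi hS)
  have hpre := hcrit.preconnected_induce_compl_of_isClique hchi (isClique_empty (G := G))
  rw [Set.compl_empty] at hpre
  exact ⟨no_clique_sep, ⟨(induceUnivIso G).preconnected_iff.mp hpre⟩,
    fun v hv => no_clique_sep {v} hv (isClique_singleton v)⟩
end

section
/- Let G be a critical graph with chromatic number k+1 for an integer k ≥ 0. Then for any two distinct vertices v and w of G, λ_G(v,w) ≥ k; consequently, G is k-edge-connected. -/
open SimpleGraph

/-!
Dirac's argument shows that in a critical graph with chromatic number `k + 1` every edge cut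
separating two vertices has at least `k` edges: otherwise colour both sides with `k` colours
(possible by criticality) and shift the colours on one side cyclically; each of the fewer than `k`
crossing edges forbids only one of the `k` shifts. The edge version of Menger's theorem then gives
`k` edge-disjoint paths between any two vertices: augmenting paths build a unit flow of value `k`,
which decomposes into `k` edge-disjoint paths. A separating edge set meets every path between two
vertices it separates, hence each of these `k` paths.
-/

open Finset

namespace SimpleGraph

variable {V : Type*} {G : SimpleGraph V}

lemma exists_isPath_forall_darts_or_exists_finset [Fintype V]
    (R : V → V → Prop) (s t : V) :
    (∃ p : G.Walk s t, p.IsPath ∧ ∀ d ∈ p.darts, R d.fst d.snd) ∨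
      ∃ S : Finset V, s ∈ S ∧ t ∉ S ∧ ∀ u ∈ S, ∀ v ∉ S, G.Adj u v → ¬R u v := by
  classical
  let S : Finset V := {u | ∃ p : G.Walk s u, ∀ d ∈ p.darts, R d.fst d.snd}
  by_cases ht : t ∈ S
  · obtain ⟨p, hp⟩ := (mem_filter.mp ht).2
    exact .inl ⟨p.bypass, p.bypass_isPath, fun d hd => hp d (p.darts_bypass_subset_darts hd)⟩
  refine .inr ⟨S, mem_filter.mpr ⟨mem_univ _, .nil, by simp⟩, ht, ?_⟩
  intro u hu v hv huv hR
  obtain ⟨p, hp⟩ := (mem_filter.mp hu).2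
  refine hv (mem_filter.mpr ⟨mem_univ _, p.concat huv, fun d hd => ?_⟩)
  rw [Walk.darts_concat, List.concat_eq_append, List.mem_append, List.mem_singleton] at hd
  rcases hd with hd | rfl
  exacts [hp d hd, hR]

namespace Walk

variable [DecidableEq V]

def netFlow : {u v : V} → G.Walk u v → V → V → ℤ
  | _, _, nil => 0
  | a, _, cons (v := b) _ p => fun x y =>
      (if x = a ∧ y = b then 1 else 0) - (if x = b ∧ y = a then 1 else 0) + p.netFlow x y

@[simp] lemma netFlow_nil {u : V} (x y : V) : (nil : G.Walk u u).netFlow x y = 0 := rfl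

@[simp] lemma netFlow_cons {u v w : V} (h : G.Adj u v) (p : G.Walk v w) (x y : V) :
    (cons h p).netFlow x y =
      (if x = u ∧ y = v then 1 else 0) - (if x = v ∧ y = u then 1 else 0) + p.netFlow x y := rfl

lemma netFlow_swap {u v : V} (p : G.Walk u v) (x y : V) : p.netFlow y x = -p.netFlow x y := by
  induction p with
  | nil => simp
  | cons h p ih =>
    simp only [netFlow_cons, ih]
    split_ifs <;> first | omega | tauto

lemma sum_netFlow [Fintype V] {u v : V} (p : G.Walk u v) (x : V) :
    ∑ y, p.netFlow x y = (if x = u then 1 else 0) - (if x = v then 1 else 0) := by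
  induction p with
  | nil => simp
  | cons h p ih =>
    simp only [netFlow_cons, sum_add_distrib, sum_sub_distrib, ih]
    simp only [ite_and]
    split_ifs <;> simp_all

lemma netFlow_eq_zero_of_not_mem_edges {u v x y : V} {p : G.Walk u v}
    (h : s(x, y) ∉ p.edges) : p.netFlow x y = 0 := by
  induction p with
  | nil => rfl
  | cons hadj p ih =>
    rw [edges_cons, List.mem_cons, not_or] at h
    rw [netFlow_cons, ih h.2, if_neg, if_neg]
    · rfl
    · rintro ⟨rfl, rfl⟩; exact h.1 Sym2.eq_swap
    · rintro ⟨rfl, rfl⟩; exact h.1 rfl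

lemma exists_dart_of_netFlow_pos {u v x y : V} {p : G.Walk u v} (h : 0 < p.netFlow x y) :
    ∃ d ∈ p.darts, d.fst = x ∧ d.snd = y := by
  induction p with
  | nil => simp at h
  | @cons a b _ hadj p ih =>
    rw [netFlow_cons] at h
    by_cases hxy : x = a ∧ y = b
    · exact ⟨⟨_, hadj⟩, List.mem_cons_self .., hxy.1.symm, hxy.2.symm⟩
    · obtain ⟨d, hd, hd'⟩ := ih (by rw [if_neg hxy] at h; split_ifs at h <;> omega)
      exact ⟨d, List.mem_cons_of_mem _ hd, hd'⟩

lemma IsTrail.netFlow_le_one {u v : V} {p : G.Walk u v} (hp : p.IsTrail) (x y : V) :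
    p.netFlow x y ≤ 1 := by
  induction p with
  | nil => simp
  | cons hadj p ih =>
    rw [isTrail_cons] at hp
    rw [netFlow_cons]
    split_ifs with h₁ h₂
    · exact absurd (h₁.1.symm.trans h₂.1) hadj.ne
    · obtain ⟨rfl, rfl⟩ := h₁
      rw [netFlow_eq_zero_of_not_mem_edges hp.2]; simp
    · have := ih hp.1; omega
    · simpa using ih hp.1

lemma IsTrail.netFlow_dart {u v : V} {p : G.Walk u v} (hp : p.IsTrail) {d : G.Dart}
    (hd : d ∈ p.darts) : p.netFlow d.fst d.snd = 1 := by
  induction p with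
  | nil => simp at hd
  | @cons a b _ hadj p ih =>
    rw [isTrail_cons] at hp
    rw [darts_cons, List.mem_cons] at hd
    rcases hd with rfl | hd
    · simp [hadj.ne.symm, netFlow_eq_zero_of_not_mem_edges hp.2]
    · have hne : d.edge ≠ s(a, b) := fun h => hp.2 (h ▸ List.mem_map_of_mem (f := Dart.edge) hd)
      rw [netFlow_cons, ih hp.1 hd, if_neg, if_neg]
      · rfl
      · rintro ⟨h₁, h₂⟩; exact hne (by rw [Dart.edge, Sym2.mk, h₁, h₂]; exact Sym2.eq_swap)
      · rintro ⟨h₁, h₂⟩; exact hne (by rw [Dart.edge, Sym2.mk, h₁, h₂])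

end Walk

section UnitFlow

variable [DecidableRel G.Adj]

lemma natCast_card_interedges (S T : Finset V) :
    (#(G.interedges S T) : ℤ) = ∑ u ∈ S, ∑ v ∈ T, G.adjMatrix ℤ u v := by
  simp only [interedges, Rel.interedges, card_filter, sum_product, adjMatrix_apply]
  push_cast
  rfl

variable [Fintype V]

variable (G) in
/-- A unit-capacity `s`-`t` flow in skew-symmetric form: `f u v` is the net flow from `u` to `v`. -/
structure IsUnitFlow (s t : V) (f : V → V → ℤ) : Prop where
  skew : ∀ u v, f v u = -f u v
  le_adjMatrix : ∀ u v, f u v ≤ G.adjMatrix ℤ u v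
  sum_eq_zero : ∀ u, u ≠ s → u ≠ t → ∑ v, f u v = 0

lemma isUnitFlow_zero (s t : V) : G.IsUnitFlow s t 0 where
  skew := by simp
  le_adjMatrix u v := by by_cases h : G.Adj u v <;> simp [h]
  sum_eq_zero := by simp

namespace IsUnitFlow

variable {s t u v : V} {f : V → V → ℤ}

lemma le_one (hf : G.IsUnitFlow s t f) (u v : V) : f u v ≤ 1 := by
  have := hf.le_adjMatrix u v
  by_cases h : G.Adj u v <;> simp only [adjMatrix_apply, h, if_true, if_false] at this <;> omega

lemma eq_zero_of_not_adj (hf : G.IsUnitFlow s t f) (h : ¬G.Adj u v) : f u v = 0 := by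
  have h₁ := hf.le_adjMatrix u v
  have h₂ := hf.le_adjMatrix v u
  rw [hf.skew, adjMatrix_apply, if_neg (fun h' => h h'.symm)] at h₂
  rw [adjMatrix_apply, if_neg h] at h₁
  omega

variable [DecidableEq V]

lemma sum_eq_sum_sum_compl (hf : G.IsUnitFlow s t f) {S : Finset V} (hs : s ∈ S) (ht : t ∉ S) :
    ∑ v, f s v = ∑ u ∈ S, ∑ v ∈ Sᶜ, f u v := by
  have hinner : ∑ u ∈ S, ∑ v ∈ S, f u v = 0 := by
    have : ∑ u ∈ S, ∑ v ∈ S, f u v = -∑ u ∈ S, ∑ v ∈ S, f u v := by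
      conv_lhs => rw [sum_comm]
      simp only [← sum_neg_distrib]
      exact sum_congr rfl fun u _ => sum_congr rfl fun v _ => hf.skew u v
    omega
  calc ∑ v, f s v = ∑ u ∈ S, ∑ v, f u v :=
        (sum_eq_single_of_mem s hs fun u hu hus =>
          hf.sum_eq_zero u hus (ne_of_mem_of_not_mem hu ht)).symm
    _ = ∑ u ∈ S, ∑ v ∈ S, f u v + ∑ u ∈ S, ∑ v ∈ Sᶜ, f u v := by
        simp only [← sum_add_distrib, sum_add_sum_compl]
    _ = ∑ u ∈ S, ∑ v ∈ Sᶜ, f u v := by rw [hinner, zero_add]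

lemma add_netFlow (hf : G.IsUnitFlow s t f) {p : G.Walk s t} (hp : p.IsTrail)
    (hres : ∀ d ∈ p.darts, f d.fst d.snd ≤ 0) : G.IsUnitFlow s t (f + p.netFlow) where
  skew u v := by simp only [Pi.add_apply, hf.skew u v, p.netFlow_swap u v]; ring
  le_adjMatrix u v := by
    simp only [Pi.add_apply]
    by_cases h : 0 < p.netFlow u v
    · obtain ⟨d, hd, rfl, rfl⟩ := p.exists_dart_of_netFlow_pos h
      have := hres d hd
      have := hp.netFlow_le_one d.fst d.snd
      rw [adjMatrix_apply, if_pos d.adj]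
      omega
    · have := hf.le_adjMatrix u v
      omega
  sum_eq_zero u hs ht := by
    simp [sum_add_distrib, hf.sum_eq_zero u hs ht, p.sum_netFlow, hs, ht]

lemma sub_netFlow (hf : G.IsUnitFlow s t f) {p : G.Walk s t} (hp : p.IsTrail)
    (hpos : ∀ d ∈ p.darts, 0 < f d.fst d.snd) : G.IsUnitFlow s t (f - p.netFlow) where
  skew u v := by simp only [Pi.sub_apply, hf.skew u v, p.netFlow_swap u v]; ring
  le_adjMatrix u v := by
    simp only [Pi.sub_apply]
    by_cases h : 0 < p.netFlow v u
    · obtain ⟨d, hd, rfl, rfl⟩ := p.exists_dart_of_netFlow_pos h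
      have := hpos d hd
      have := hp.netFlow_le_one d.fst d.snd
      rw [hf.skew, p.netFlow_swap, adjMatrix_apply, if_pos d.adj.symm]
      omega
    · have := hf.le_adjMatrix u v
      rw [p.netFlow_swap] at h
      omega
  sum_eq_zero u hs ht := by
    simp [sum_sub_distrib, hf.sum_eq_zero u hs ht, p.sum_netFlow, hs, ht]

lemma pos_and_not_mem_edges_of_sub_netFlow_pos (hf : G.IsUnitFlow s t f) {p : G.Walk s t}
    (hp : p.IsTrail) (hpos : ∀ d ∈ p.darts, 0 < f d.fst d.snd) (h : 0 < (f - p.netFlow) u v) :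
    0 < f u v ∧ s(u, v) ∉ p.edges := by
  rw [Pi.sub_apply, Pi.sub_apply] at h
  by_cases he : s(u, v) ∈ p.edges
  · exfalso
    obtain ⟨d, hd, hde⟩ := List.mem_map.mp he
    have h₁ := hp.netFlow_dart hd
    have h₂ := hpos d hd
    have h₃ := hf.le_one d.fst d.snd
    rcases Sym2.eq_iff.mp hde with ⟨rfl, rfl⟩ | ⟨rfl, rfl⟩
    · omega
    · rw [hf.skew, p.netFlow_swap] at h
      omega
  · rw [p.netFlow_eq_zero_of_not_mem_edges he] at h
    exact ⟨by omega, he⟩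

lemma exists_sum_eq_add_one (hf : G.IsUnitFlow s t f) (hst : s ≠ t)
    (hcut : ∀ S : Finset V, s ∈ S → t ∉ S → ∑ v, f s v < #(G.interedges S Sᶜ)) :
    ∃ g, G.IsUnitFlow s t g ∧ ∑ v, g s v = ∑ v, f s v + 1 := by
  rcases exists_isPath_forall_darts_or_exists_finset (G := G) (fun u v => f u v ≤ 0) s t with
    ⟨p, hp, hres⟩ | ⟨S, hs, ht, hS⟩
  · exact ⟨f + p.netFlow, hf.add_netFlow hp.isTrail hres,
      by simp [sum_add_distrib, p.sum_netFlow, hst]⟩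
  · refine absurd (hcut S hs ht) (not_lt.mpr (le_of_eq ?_))
    rw [hf.sum_eq_sum_sum_compl hs ht, natCast_card_interedges]
    refine sum_congr rfl fun u hu => sum_congr rfl fun v hv => ?_
    by_cases hadj : G.Adj u v
    · have := hS u hu v (mem_compl.mp hv) hadj
      have := hf.le_one u v
      rw [adjMatrix_apply, if_pos hadj]
      omega
    · rw [adjMatrix_apply, if_neg hadj, hf.eq_zero_of_not_adj hadj]

lemma exists_isPath_of_sum_pos (hf : G.IsUnitFlow s t f) (h : 0 < ∑ v, f s v) :
    ∃ p : G.Walk s t, p.IsPath ∧ ∀ d ∈ p.darts, 0 < f d.fst d.snd := by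
  refine (exists_isPath_forall_darts_or_exists_finset (fun u v => 0 < f u v) s t).resolve_right ?_
  rintro ⟨S, hs, ht, hS⟩
  refine h.not_ge (hf.sum_eq_sum_sum_compl hs ht ▸ sum_nonpos fun u hu => sum_nonpos fun v hv => ?_)
  by_cases hadj : G.Adj u v
  · exact not_lt.mp (hS u hu v (mem_compl.mp hv) hadj)
  · exact (hf.eq_zero_of_not_adj hadj).le

lemma exists_edgeDisjoint_paths (hf : G.IsUnitFlow s t f) (hst : s ≠ t) (m : ℕ)
    (hm : (m : ℤ) ≤ ∑ v, f s v) :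
    ∃ P : Fin m → G.Walk s t, (∀ i, (P i).IsPath) ∧ (∀ i, ∀ d ∈ (P i).darts, 0 < f d.fst d.snd) ∧
      ∀ i j, i ≠ j → ∀ e ∈ (P i).edges, e ∉ (P j).edges := by
  induction m generalizing f with
  | zero => exact ⟨Fin.elim0, fun i => i.elim0, fun i => i.elim0, fun i => i.elim0⟩
  | succ m ih =>
    obtain ⟨p, hp, hpos⟩ := hf.exists_isPath_of_sum_pos (by omega)
    obtain ⟨P, hP, hPpos, hPdisj⟩ := ih (hf.sub_netFlow hp.isTrail hpos)
      (by simp [sum_sub_distrib, p.sum_netFlow, hst]; omega)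
    have hP' : ∀ i, ∀ d ∈ (P i).darts, 0 < f d.fst d.snd ∧ d.edge ∉ p.edges := fun i d hd =>
      hf.pos_and_not_mem_edges_of_sub_netFlow_pos hp.isTrail hpos (hPpos i d hd)
    have hpP : ∀ i, ∀ e ∈ (P i).edges, e ∉ p.edges := fun i e he => by
      obtain ⟨d, hd, rfl⟩ := List.mem_map.mp he
      exact (hP' i d hd).2
    refine ⟨Fin.cons p P, Fin.cases hp hP, Fin.cases hpos fun i d hd => (hP' i d hd).1, ?_⟩
    intro i j hij e hi hj
    cases i using Fin.cases <;> cases j using Fin.cases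
    · exact hij rfl
    · exact hpP _ e hj hi
    · exact hpP _ e hi hj
    · exact hPdisj _ _ (fun h => hij (congrArg Fin.succ h)) e hi hj

end IsUnitFlow

variable [DecidableEq V]

lemma exists_isUnitFlow_le_sum {s t : V} (hst : s ≠ t) {k : ℕ}
    (hcut : ∀ S : Finset V, s ∈ S → t ∉ S → k ≤ #(G.interedges S Sᶜ)) :
    ∃ f, G.IsUnitFlow s t f ∧ (k : ℤ) ≤ ∑ v, f s v := by
  suffices ∀ j ≤ k, ∃ f, G.IsUnitFlow s t f ∧ (j : ℤ) ≤ ∑ v, f s v from this k le_rfl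
  intro j
  induction j with
  | zero => exact fun _ => ⟨0, isUnitFlow_zero s t, by simp⟩
  | succ j ih =>
    intro hj
    obtain ⟨f, hf, hfj⟩ := ih (by omega)
    by_cases h : ((j + 1 : ℕ) : ℤ) ≤ ∑ v, f s v
    · exact ⟨f, hf, h⟩
    obtain ⟨g, hg, hgf⟩ := hf.exists_sum_eq_add_one hst fun S hs ht => by
      have := hcut S hs ht
      omega
    exact ⟨g, hg, by omega⟩

end UnitFlow

lemma colorable_of_card_interedges_lt [Fintype V] [DecidableEq V] [DecidableRel G.Adj] {n : ℕ}
    {S : Finset V} (h₁ : (G.induce (S : Set V)).Colorable n)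
    (h₂ : (G.induce (S : Set V)ᶜ).Colorable n) (h : #(G.interedges S Sᶜ) < n) : G.Colorable n := by
  obtain _ | n := n
  · exact absurd h (Nat.not_lt_zero _)
  obtain ⟨c₁⟩ := h₁
  obtain ⟨c₂⟩ := h₂
  let a : V → Fin (n + 1) := fun x => if hx : x ∈ S then c₁ ⟨x, hx⟩ else 0
  let b : V → Fin (n + 1) := fun x => if hx : x ∈ S then 0 else c₂ ⟨x, hx⟩
  obtain ⟨i, hi⟩ : ∃ i, i ∉ (G.interedges S Sᶜ).image fun e => a e.1 - b e.2 := by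
    by_contra! hall
    have := (card_le_card (s := univ) fun i _ => hall i).trans card_image_le
    rw [card_univ, Fintype.card_fin] at this
    omega
  have hcross : ∀ {x y}, x ∈ S → y ∉ S → G.Adj x y → a x ≠ b y + i := fun hx hy hxy hab =>
    hi (mem_image.mpr ⟨(_, _), G.mem_interedges_iff.mpr ⟨hx, mem_compl.mpr hy, hxy⟩,
      by rw [hab, add_sub_cancel_left]⟩)
  refine ⟨Coloring.mk (fun x => if x ∈ S then a x else b x + i) fun {x y} hxy => ?_⟩
  by_cases hx : x ∈ S <;> by_cases hy : y ∈ S <;> simp only [hx, hy, if_true, if_false]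
  · simpa [a, hx, hy] using c₁.valid (v := ⟨x, hx⟩) (w := ⟨y, hy⟩) hxy
  · exact hcross hx hy hxy
  · exact (hcross hy hx hxy.symm).symm
  · simpa [b, hx, hy] using c₂.valid (v := ⟨x, hx⟩) (w := ⟨y, hy⟩) hxy

lemma le_ncard_of_pairwise_disjoint_edges {u v : V} {n : ℕ} {P : Fin n → G.Walk u v}
    (hdisj : ∀ i j, i ≠ j → ∀ e ∈ (P i).edges, e ∉ (P j).edges) {F : Set (Sym2 V)}
    (hF : F.Finite) (hmeet : ∀ i, ∃ e ∈ F, e ∈ (P i).edges) : n ≤ F.ncard := by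
  choose e heF he using hmeet
  have hinj : Function.Injective fun i => (⟨e i, heF i⟩ : F) := fun i j hij => by
    by_contra hne
    have hij' : e i = e j := congrArg Subtype.val hij
    exact hdisj i j hne _ (he i) (hij' ▸ he j)
  have := hF.to_subtype
  simpa [Nat.card_coe_set_eq] using Nat.card_le_card_of_injective _ hinj

end SimpleGraph

theorem hasEdgeDisjointPaths_of_le_card_interedges {V : Type} [Fintype V] [DecidableEq V]
    {G : SimpleGraph V} [DecidableRel G.Adj] {s t : V} {k : ℕ} (hst : s ≠ t)
    (hcut : ∀ S : Finset V, s ∈ S → t ∉ S → k ≤ #(G.interedges S Sᶜ)) :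
    HasEdgeDisjointPaths G s t k := by
  obtain ⟨f, hf, hk⟩ := exists_isUnitFlow_le_sum hst hcut
  obtain ⟨P, hP, -, hdisj⟩ := hf.exists_edgeDisjoint_paths hst k hk
  exact ⟨P, hP, hdisj⟩

lemma bddAbove_hasEdgeDisjointPaths {V : Type} [Finite V] (G : SimpleGraph V) {u v : V}
    (huv : u ≠ v) : BddAbove {n | HasEdgeDisjointPaths G u v n} :=
  ⟨(Set.univ : Set (Sym2 V)).ncard, fun _ ⟨P, _, hdisj⟩ =>
    le_ncard_of_pairwise_disjoint_edges hdisj Set.finite_univ fun i =>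
      ⟨_, Set.mem_univ _, (P i).mk_start_snd_mem_edges (Walk.not_nil_of_ne huv)⟩⟩

lemma IsSepEdgeSet.exists_not_reachable {V : Type} [Finite V] {G : SimpleGraph V}
    {F : Set (Sym2 V)} (h : IsSepEdgeSet G F) : ∃ v w, ¬(G.deleteEdges F).Reachable v w := by
  by_contra! hconn
  have := Preconnected.subsingleton_connectedComponent hconn
  exact h.not_ge (Nat.card_le_card_of_injective
    (ConnectedComponent.map (Hom.ofLE (G.deleteEdges_le F))) (Function.injective_of_subsingleton _))

lemma IsCritical.colorable_induce {V : Type} {G : SimpleGraph V} {k : ℕ} (hG : IsCritical G)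
    (hχ : G.chromaticNumber = (k + 1 : ℕ)) {U : Set V} (hU : U ≠ Set.univ) :
    (G.induce U).Colorable k := by
  have hne : (⊤ : G.Subgraph).induce U ≠ ⊤ := fun h => hU (by simpa using congrArg Subgraph.verts h)
  have := hG _ hne
  rw [hχ, Nat.cast_succ, ENat.lt_natCast_add_one_iff, chromaticNumber_le_iff_colorable] at this
  rwa [induce_eq_coe_induce_top]

lemma IsCritical.le_card_interedges {V : Type} [Fintype V] [DecidableEq V] {G : SimpleGraph V}
    [DecidableRel G.Adj] {k : ℕ} (hG : IsCritical G) (hχ : G.chromaticNumber = (k + 1 : ℕ))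
    {S : Finset V} {s t : V} (hs : s ∈ S) (ht : t ∉ S) : k ≤ #(G.interedges S Sᶜ) := by
  by_contra! h
  have hS : (S : Set V) ≠ Set.univ := (Set.ne_univ_iff_exists_notMem _).mpr ⟨t, ht⟩
  have hSc : (S : Set V)ᶜ ≠ Set.univ := (Set.ne_univ_iff_exists_notMem _).mpr ⟨s, by simpa⟩
  have := (colorable_of_card_interedges_lt (hG.colorable_induce hχ hS)
    (hG.colorable_induce hχ hSc) h).chromaticNumber_le
  rw [hχ, Nat.cast_le] at this
  omega

lemma IsCritical.hasEdgeDisjointPaths {V : Type} [Fintype V] {G : SimpleGraph V} {k : ℕ}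
    (hG : IsCritical G) (hχ : G.chromaticNumber = (k + 1 : ℕ)) {v w : V} (hvw : v ≠ w) :
    HasEdgeDisjointPaths G v w k := by
  classical
  exact hasEdgeDisjointPaths_of_le_card_interedges hvw fun _ hs ht => hG.le_card_interedges hχ hs ht

/-- In a critical graph with chromatic number `k+1`, any two
distinct vertices are joined by `k` edge-disjoint paths; consequently the graph
is `k`-edge-connected. -/
theorem critical_localEdgeConn_ge {V : Type} [Fintype V] (G : SimpleGraph V) (k : ℕ)
    (hcrit : IsCritical G) (hchi : G.chromaticNumber = (↑(k + 1) : ℕ∞)) :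
    (∀ v w : V, v ≠ w → k ≤ localEdgeConn G v w) ∧
    (∀ F : Set (Sym2 V), IsSepEdgeSet G F → k ≤ F.ncard) := by
  refine ⟨fun v w hvw => le_csSup (bddAbove_hasEdgeDisjointPaths G hvw)
    (hcrit.hasEdgeDisjointPaths hchi hvw), fun F hF => ?_⟩
  obtain ⟨v, w, hvw⟩ := hF.exists_not_reachable
  have hne : v ≠ w := by rintro rfl; exact hvw .rfl
  obtain ⟨P, -, hdisj⟩ := hcrit.hasEdgeDisjointPaths hchi hne
  exact le_ncard_of_pairwise_disjoint_edges hdisj F.toFinite fun i =>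
    (P i).exists_mem_edges_of_not_reachable_deleteEdges hvw
end

section
/- Let G be a critical graph with chromatic number k+1 for an integer k ≥ 1. Then every block of the low vertex subgraph G_L is a complete graph or an odd cycle. -/
open SimpleGraph

/-!
A block `B` of the low vertex subgraph is an induced subgraph of `G`. By criticality `G - V(B)`
has a `k`-coloring, and each vertex `v` of `B` may still use the colors missing on its neighbors
outside `B`; as `v` has degree `k` in `G`, at least `deg_B v` colors remain. A coloring of `B` from
these lists would complete a `k`-coloring of `G`, so the 2-connected graph `B` is not
degree-choosable. By the theorem of Erdős, Rubin and Taylor and of Borodin, whose proof reduces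
to Brooks' theorem in list form via Lovász's lemma, it is then complete or an odd cycle.
-/

namespace SimpleGraph

open Finset

section ReachableIn

variable {W : Type*} (H : SimpleGraph W)

def ReachableIn (s : Finset W) : W → W → Prop :=
  Relation.ReflTransGen fun a b => H.Adj a b ∧ a ∈ s ∧ b ∈ s

def PreconnectedOn (s : Finset W) : Prop :=
  ∀ x ∈ s, ∀ y ∈ s, H.ReachableIn s x y

variable {H} {s t : Finset W} {x y z w : W}

namespace ReachableIn

theorem refl (x : W) : H.ReachableIn s x x := Relation.ReflTransGen.refl

theorem single (h : H.Adj x y) (hx : x ∈ s) (hy : y ∈ s) : H.ReachableIn s x y :=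
  Relation.ReflTransGen.single ⟨h, hx, hy⟩

theorem trans (h₁ : H.ReachableIn s x y) (h₂ : H.ReachableIn s y z) : H.ReachableIn s x z :=
  Relation.ReflTransGen.trans h₁ h₂

theorem symm (h : H.ReachableIn s x y) : H.ReachableIn s y x := by
  induction h with
  | refl => exact refl _
  | tail _ hab ih => exact (single hab.1.symm hab.2.2 hab.2.1).trans ih

theorem mono (hst : s ⊆ t) (h : H.ReachableIn s x y) : H.ReachableIn t x y :=
  Relation.ReflTransGen.mono (fun _ _ hab => ⟨hab.1, hst hab.2.1, hst hab.2.2⟩) _ _ h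

theorem mem_of_closed (hT : ∀ a ∈ t, ∀ b ∈ s, H.Adj a b → b ∈ t)
    (h : H.ReachableIn s x y) (hx : x ∈ t) : y ∈ t := by
  induction h with
  | refl => exact hx
  | tail _ hab ih => exact hT _ ih _ hab.2.2 hab.1

theorem restrict_of_closed (hT : ∀ a ∈ t, a ≠ w → ∀ b ∈ s, H.Adj a b → b ∈ t)
    (h : H.ReachableIn s x w) (hx : x ∈ t) : H.ReachableIn t x w := by
  induction h using Relation.ReflTransGen.head_induction_on with
  | refl => exact refl _
  | head hab _ ih =>
    rename_i a b _
    by_cases haw : a = w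
    · exact haw ▸ refl _
    · have hb := hT a hx haw b hab.2.2 hab.1
      exact (single hab.1 hx hb).trans (ih hb)

theorem exists_adj_of_mem_of_notMem (h : H.ReachableIn s x y) (hx : x ∈ t) (hy : y ∉ t) :
    ∃ a ∈ t, ∃ b ∈ s, b ∉ t ∧ H.Adj a b := by
  by_contra! hno
  exact hy (mem_of_closed (fun a ha b hb hab => by_contra fun hbt => hno a ha b hb hbt hab) h hx)

theorem exists_adj_of_ne (h : H.ReachableIn s x y) (hxy : x ≠ y) : ∃ a ∈ s, H.Adj x a := by
  rcases Relation.ReflTransGen.cases_head h with rfl | ⟨a, hxa, -⟩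
  · exact absurd rfl hxy
  · exact ⟨a, hxa.2.2, hxa.1⟩

end ReachableIn

theorem PreconnectedOn.of_forall_reachableIn (h : ∀ x ∈ s, H.ReachableIn s x w) :
    H.PreconnectedOn s :=
  fun x hx y hy => (h x hx).trans (h y hy).symm

theorem Reachable.reachableIn {W' : Type*} {H' : SimpleGraph W'} (f : H' →g H)
    (hf : ∀ a, f a ∈ s) {a b : W'} (h : H'.Reachable a b) : H.ReachableIn s (f a) (f b) := by
  obtain ⟨p⟩ := h
  induction p with
  | nil => exact .refl _
  | cons hab _ ih => exact (ReachableIn.single (f.map_adj hab) (hf _) (hf _)).trans ih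

variable [Fintype W]

theorem Connected.preconnectedOn_univ (hconn : H.Connected) : H.PreconnectedOn univ :=
  fun x _ y _ => (hconn.preconnected x y).reachableIn (Hom.id) fun _ => mem_univ _

variable [DecidableEq W]

theorem preconnectedOn_univ_erase {u : W} (h : (H.induce {u}ᶜ).Preconnected) :
    H.PreconnectedOn (univ.erase u) := fun x hx y hy =>
  (h ⟨x, (mem_erase.1 hx).1⟩ ⟨y, (mem_erase.1 hy).1⟩).reachableIn (Embedding.induce _).toHom
    fun a => mem_erase.2 ⟨a.2, mem_univ _⟩

end ReachableIn

section ListColoring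

variable {W α : Type*} (H : SimpleGraph W) [DecidableRel H.Adj]

def degreeIn (s : Finset W) (v : W) : ℕ := #{w ∈ s | H.Adj v w}

def IsListColoringOn (s : Finset W) (L : W → Finset α) (c : W → α) : Prop :=
  (∀ v ∈ s, c v ∈ L v) ∧ ∀ v ∈ s, ∀ w ∈ s, H.Adj v w → c v ≠ c w

/-- The lists left for the uncolored vertices once `u` has received the color `a`. -/
def listsAfter [DecidableEq α] (L : W → Finset α) (u : W) (a : α) (t : W) : Finset α :=
  if H.Adj u t then (L t).erase a else L t

variable {H} {s t : Finset W} {L : W → Finset α} {u v r : W}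

theorem degreeIn_univ [Fintype W] (v : W) : H.degreeIn univ v = H.degree v := by
  rw [← card_neighborFinset_eq_degree, neighborFinset_eq_filter, degreeIn]

theorem degreeIn_mono (h : t ⊆ s) (v : W) : H.degreeIn t v ≤ H.degreeIn s v :=
  card_le_card (filter_subset_filter _ h)

theorem degreeIn_lt_of_adj (h : t ⊆ s) {b : W} (hb : b ∈ s) (hbt : b ∉ t) (hvb : H.Adj v b) :
    H.degreeIn t v < H.degreeIn s v :=
  card_lt_card ⟨filter_subset_filter _ h, fun hsub => hbt (mem_filter.1 (hsub (by simpa [hb]))).1⟩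

theorem degreeIn_erase_add_one [DecidableEq W] (hu : u ∈ s) (hvu : H.Adj v u) :
    H.degreeIn (s.erase u) v + 1 = H.degreeIn s v := by
  rw [degreeIn, degreeIn, filter_erase, card_erase_add_one (mem_filter.2 ⟨hu, hvu⟩)]

/-- Greedy coloring: remove a vertex whose list exceeds its degree, color the rest, and give the
removed vertex a color its neighbors do not use. -/
theorem exists_isListColoringOn_of_forall_exists_degreeIn_lt [Nonempty α]
    (h : ∀ t ⊆ s, t.Nonempty → ∃ v ∈ t, H.degreeIn t v < #(L v)) :
    ∃ c, H.IsListColoringOn s L c := by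
  classical
  induction s using Finset.strongInduction with
  | H s ih =>
  obtain rfl | hs := s.eq_empty_or_nonempty
  · exact ⟨fun _ => Classical.arbitrary α, by simp, by simp⟩
  obtain ⟨v, hv, hlt⟩ := h s subset_rfl hs
  obtain ⟨c, hcL, hcadj⟩ := ih (s.erase v) (erase_ssubset hv)
    fun t ht => h t (ht.trans (erase_subset v s))
  obtain ⟨a, haL, hafree⟩ := exists_mem_notMem_of_card_lt_card
    (lt_of_le_of_lt (card_image_le (s := {w ∈ s | H.Adj v w}) (f := c)) hlt)
  have hfree : ∀ w ∈ s, H.Adj v w → c w ≠ a := fun w hw hvw hwa =>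
    hafree (mem_image.2 ⟨w, mem_filter.2 ⟨hw, hvw⟩, hwa⟩)
  refine ⟨Function.update c v a, fun w hw => ?_, fun w hw x hx hwx => ?_⟩
  · rcases eq_or_ne w v with rfl | hwv
    · simpa using haL
    · simpa [hwv] using hcL w (mem_erase.2 ⟨hwv, hw⟩)
  · rcases eq_or_ne w v with rfl | hwv
    · simpa [hwx.ne'] using (hfree x hx hwx).symm
    rcases eq_or_ne x v with rfl | hxv
    · simpa [hwv] using hfree w hw hwx.symm
    simpa [hwv, hxv] using hcadj w (mem_erase.2 ⟨hwv, hw⟩) x (mem_erase.2 ⟨hxv, hx⟩) hwx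

/-- Every subset of `s` missing `r` has an edge to the rest of `s`. -/
theorem exists_isListColoringOn_of_degreeIn_lt [Nonempty α] (hs : H.PreconnectedOn s)
    (hr : r ∈ s) (hL : ∀ v ∈ s, H.degreeIn s v ≤ #(L v)) (hlt : H.degreeIn s r < #(L r)) :
    ∃ c, H.IsListColoringOn s L c := by
  refine exists_isListColoringOn_of_forall_exists_degreeIn_lt fun t hts ⟨x, hx⟩ => ?_
  by_cases hrt : r ∈ t
  · exact ⟨r, hrt, (degreeIn_mono hts r).trans_lt hlt⟩
  obtain ⟨a, ha, b, hb, hbt, hab⟩ := (hs x (hts hx) r hr).exists_adj_of_mem_of_notMem hx hrt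
  exact ⟨a, ha, (degreeIn_lt_of_adj hts hb hbt hab).trans_le (hL a (hts ha))⟩

variable [DecidableEq W] [DecidableEq α] {a : α}

theorem IsListColoringOn.update_listsAfter {c : W → α}
    (hc : H.IsListColoringOn (s.erase u) (H.listsAfter L u a) c) (ha : a ∈ L u) :
    H.IsListColoringOn s L (Function.update c u a) := by
  have hsub : ∀ t, H.listsAfter L u a t ⊆ L t := fun t => by
    unfold listsAfter; split_ifs <;> simp [erase_subset]
  have hne : ∀ t ∈ s.erase u, H.Adj u t → c t ≠ a := fun t ht hut hta =>
    by simpa [listsAfter, hut, hta] using hc.1 t ht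
  refine ⟨fun t ht => ?_, fun t ht x hx htx => ?_⟩
  · rcases eq_or_ne t u with rfl | htu
    · simpa using ha
    · simpa [htu] using hsub t (hc.1 t (mem_erase.2 ⟨htu, ht⟩))
  · rcases eq_or_ne t u with rfl | htu
    · simpa [htx.ne'] using (hne x (mem_erase.2 ⟨htx.ne', hx⟩) htx).symm
    rcases eq_or_ne x u with rfl | hxu
    · simpa [htu] using hne t (mem_erase.2 ⟨htu, ht⟩) htx.symm
    simpa [htu, hxu] using hc.2 t (mem_erase.2 ⟨htu, ht⟩) x (mem_erase.2 ⟨hxu, hx⟩) htx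

theorem degreeIn_erase_le_card_listsAfter (hu : u ∈ s) (hL : H.degreeIn s v ≤ #(L v)) :
    H.degreeIn (s.erase u) v ≤ #(H.listsAfter L u a v) := by
  unfold listsAfter
  split_ifs with huv
  · have := degreeIn_erase_add_one hu huv.symm
    have := pred_card_le_card_erase (s := L v) (a := a)
    omega
  · exact (degreeIn_mono (erase_subset u s) v).trans hL

theorem degreeIn_erase_lt_card_listsAfter (hu : u ∈ s) (huv : H.Adj u v) (ha : a ∉ L v)
    (hL : H.degreeIn s v ≤ #(L v)) : H.degreeIn (s.erase u) v < #(H.listsAfter L u a v) := by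
  have := degreeIn_erase_add_one hu huv.symm
  rw [listsAfter, if_pos huv, erase_eq_of_notMem ha]
  omega

end ListColoring

section Precoloring

variable {W α : Type*} {H : SimpleGraph W} [DecidableRel H.Adj] [DecidableEq W] [DecidableEq α]
  [Nonempty α] {s : Finset W} {L : W → Finset α} {a : α}

/-- Color `u` with a color missing from the list of its neighbor `v`; then `v` has slack in
`s - u`. -/
theorem exists_isListColoringOn_of_adj_of_notMem {u v : W} (hs : H.PreconnectedOn (s.erase u))
    (hu : u ∈ s) (hv : v ∈ s) (huv : H.Adj u v) (hau : a ∈ L u) (hav : a ∉ L v)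
    (hL : ∀ t ∈ s, H.degreeIn s t ≤ #(L t)) : ∃ c, H.IsListColoringOn s L c := by
  obtain ⟨c, hc⟩ := exists_isListColoringOn_of_degreeIn_lt hs (mem_erase.2 ⟨huv.ne', hv⟩)
    (fun t ht => degreeIn_erase_le_card_listsAfter hu (hL t (mem_of_mem_erase ht)))
    (degreeIn_erase_lt_card_listsAfter hu huv hav (hL v hv))
  exact ⟨_, hc.update_listsAfter hau⟩

/-- Color two nonadjacent neighbors `b`, `c` of `x` alike; then `x` has slack in `s - b - c`. -/
theorem exists_isListColoringOn_of_adj_of_adj {x b c : W}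
    (hs : H.PreconnectedOn ((s.erase b).erase c)) (hx : x ∈ s) (hb : b ∈ s) (hc : c ∈ s)
    (hxb : H.Adj x b) (hxc : H.Adj x c) (hbc : ¬H.Adj b c) (hne : b ≠ c) (hab : a ∈ L b)
    (hac : a ∈ L c) (hL : ∀ t ∈ s, H.degreeIn s t ≤ #(L t)) :
    ∃ col, H.IsListColoringOn s L col := by
  set L₁ := H.listsAfter L b a
  have hc' : c ∈ s.erase b := mem_erase.2 ⟨hne.symm, hc⟩
  have hL₁ : ∀ t ∈ s.erase b, H.degreeIn (s.erase b) t ≤ #(L₁ t) := fun t ht =>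
    degreeIn_erase_le_card_listsAfter hb (hL t (mem_of_mem_erase ht))
  have hx' : x ∈ s.erase b := mem_erase.2 ⟨hxb.ne, hx⟩
  have haL₁ : a ∉ L₁ x := by simp [L₁, listsAfter, hxb.symm]
  obtain ⟨col, hcol⟩ := exists_isListColoringOn_of_degreeIn_lt hs (mem_erase.2 ⟨hxc.ne, hx'⟩)
    (fun t ht => degreeIn_erase_le_card_listsAfter hc' (hL₁ t (mem_of_mem_erase ht)))
    (degreeIn_erase_lt_card_listsAfter hc' hxc.symm haL₁ (hL₁ x hx'))
  have hacL₁ : a ∈ L₁ c := by simpa [L₁, listsAfter, hbc] using hac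
  exact ⟨_, (hcol.update_listsAfter hacL₁).update_listsAfter hab⟩

end Precoloring

section Lovasz

variable {W : Type*} {H : SimpleGraph W} {s A X : Finset W} {x y z q t : W}

theorem PreconnectedOn.exists_adj_adj_not_adj (hs : H.PreconnectedOn s) (hx : x ∈ s) (hy : y ∈ s)
    (hxy : x ≠ y) (hnxy : ¬H.Adj x y) :
    ∃ a ∈ s, ∃ b ∈ s, ∃ c ∈ s, H.Adj a b ∧ H.Adj a c ∧ b ≠ c ∧ ¬H.Adj b c := by
  have key : ∀ u, H.ReachableIn s u y → u ∈ s → u = y ∨ H.Adj u y ∨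
      ∃ a ∈ s, ∃ b ∈ s, ∃ c ∈ s, H.Adj a b ∧ H.Adj a c ∧ b ≠ c ∧ ¬H.Adj b c := by
    intro u h
    induction h using Relation.ReflTransGen.head_induction_on with
    | refl => exact fun _ => Or.inl rfl
    | head hab _ ih =>
      rename_i a b _
      intro ha
      rcases ih hab.2.2 with rfl | hby | h
      · exact Or.inr (Or.inl hab.1)
      · by_cases hay : a = y
        · exact Or.inl hay
        by_cases hay' : H.Adj a y
        · exact Or.inr (Or.inl hay')
        exact Or.inr (Or.inr ⟨b, hab.2.2, a, ha, y, hy, hab.1.symm, hby, hay, hay'⟩)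
      · exact Or.inr (Or.inr h)
  rcases key x (hs x hx y hy) hx with h | h | h
  · exact absurd h hxy
  · exact absurd h hnxy
  · exact h

open Classical in
/-- The component of `H[s]` containing `z`; it is empty if `z ∉ s`. -/
noncomputable def componentIn (H : SimpleGraph W) (s : Finset W) (z : W) : Finset W :=
  {v ∈ s | H.ReachableIn s z v}

theorem mem_componentIn {v : W} : v ∈ H.componentIn s z ↔ v ∈ s ∧ H.ReachableIn s z v := by
  classical
  simp [componentIn]

theorem componentIn_subset : H.componentIn s z ⊆ s := fun _ hv => (mem_componentIn.1 hv).1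

theorem self_mem_componentIn (hz : z ∈ s) : z ∈ H.componentIn s z :=
  mem_componentIn.2 ⟨hz, .refl z⟩

theorem mem_componentIn_of_adj {a b : W} (ha : a ∈ H.componentIn s z) (hb : b ∈ s)
    (hab : H.Adj a b) : b ∈ H.componentIn s z :=
  mem_componentIn.2 ⟨hb, (mem_componentIn.1 ha).2.trans (.single hab (mem_componentIn.1 ha).1 hb)⟩

theorem reachableIn_of_mem_componentIn_of_mem_componentIn {z' v : W}
    (hv : v ∈ H.componentIn s z) (hv' : v ∈ H.componentIn s z') : H.ReachableIn s z z' :=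
  (mem_componentIn.1 hv).2.trans (mem_componentIn.1 hv').2.symm

variable [DecidableEq W]

theorem PreconnectedOn.reachableIn_sdiff (hA : H.PreconnectedOn A) (hq : q ∈ A)
    (hX : ∀ a ∈ X, ∀ b ∈ A.erase q, H.Adj a b → b ∈ X) (ht : t ∈ A) (htX : t ∉ X) :
    H.ReachableIn (A \ X) t q := by
  refine (hA t ht q hq).restrict_of_closed
    (fun a ha haq b hb hab => mem_sdiff.2 ⟨hb, fun hbX => ?_⟩) (mem_sdiff.2 ⟨ht, htX⟩)
  exact (mem_sdiff.1 ha).2 (hX b hbX a (mem_erase.2 ⟨haq, (mem_sdiff.1 ha).1⟩) hab.symm)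

theorem PreconnectedOn.reachableIn_insert_componentIn_erase {b : W}
    (hAb : H.PreconnectedOn (A.erase b)) (hq : q ∈ A) (hbq : b ≠ q)
    (ht : t ∈ H.componentIn (A.erase q) z) (htb : t ≠ b) :
    H.ReachableIn ((insert q (H.componentIn (A.erase q) z)).erase b) t q := by
  refine (hAb t (mem_erase.2 ⟨htb, mem_of_mem_erase (componentIn_subset ht)⟩) q
    (mem_erase.2 ⟨hbq.symm, hq⟩)).restrict_of_closed (fun a ha haq c hc hac => ?_)
    (mem_erase.2 ⟨htb, mem_insert_of_mem ht⟩)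
  obtain ⟨hcb, hcA⟩ := mem_erase.1 hc
  have haK : a ∈ H.componentIn (A.erase q) z :=
    (mem_insert.1 (mem_of_mem_erase ha)).resolve_left haq
  refine mem_erase.2 ⟨hcb, ?_⟩
  rcases eq_or_ne c q with rfl | hcq
  · exact mem_insert_self _ _
  · exact mem_insert_of_mem (mem_componentIn_of_adj haK (mem_erase.2 ⟨hcq, hcA⟩) hac)

/-- Vertices of the component `K₁ ∋ b` reach `q` inside `K₁ + q - b` (as `A - b` is
preconnected), likewise for `K₂ ∋ c`, and all other vertices avoid `K₁ ∪ K₂` on their way. -/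
theorem PreconnectedOn.reachableIn_erase_erase {b c z' : W} (hA : H.PreconnectedOn A)
    (hq : q ∈ A) (hb : b ∈ H.componentIn (A.erase q) z) (hc : c ∈ H.componentIn (A.erase q) z')
    (hzz' : ¬H.ReachableIn (A.erase q) z z') (hAb : H.PreconnectedOn (A.erase b))
    (hAc : H.PreconnectedOn (A.erase c)) (ht : t ∈ A) (htb : t ≠ b) (htc : t ≠ c) :
    H.ReachableIn ((A.erase b).erase c) t q := by
  set K₁ := H.componentIn (A.erase q) z
  set K₂ := H.componentIn (A.erase q) z'
  have hbK₂ : b ∉ K₂ := fun h => hzz' (reachableIn_of_mem_componentIn_of_mem_componentIn hb h)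
  have hcK₁ : c ∉ K₁ := fun h => hzz' (reachableIn_of_mem_componentIn_of_mem_componentIn h hc)
  have hbq : b ≠ q := (mem_erase.1 (componentIn_subset hb)).1
  have hcq : c ≠ q := (mem_erase.1 (componentIn_subset hc)).1
  have hmem : ∀ {v}, v ∈ A → v ≠ b → v ≠ c → v ∈ (A.erase b).erase c := fun hv hvb hvc =>
    mem_erase.2 ⟨hvc, mem_erase.2 ⟨hvb, hv⟩⟩
  by_cases ht₁ : t ∈ K₁
  · refine (hAb.reachableIn_insert_componentIn_erase hq hbq ht₁ htb).mono fun v hv => ?_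
    obtain ⟨hvb, hv⟩ := mem_erase.1 hv
    rcases mem_insert.1 hv with rfl | hv
    exacts [hmem hq hvb hcq.symm, hmem (mem_of_mem_erase (componentIn_subset hv)) hvb
      fun h => hcK₁ (h ▸ hv)]
  by_cases ht₂ : t ∈ K₂
  · refine (hAc.reachableIn_insert_componentIn_erase hq hcq ht₂ htc).mono fun v hv => ?_
    obtain ⟨hvc, hv⟩ := mem_erase.1 hv
    rcases mem_insert.1 hv with rfl | hv
    exacts [hmem hq hbq.symm hvc, hmem (mem_of_mem_erase (componentIn_subset hv))
      (fun h => hbK₂ (h ▸ hv)) hvc]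
  refine (hA.reachableIn_sdiff hq (X := K₁ ∪ K₂) (fun a ha v hv hav => ?_) ht
    (by simp [ht₁, ht₂])).mono fun v hv => ?_
  · rcases mem_union.1 ha with ha | ha
    exacts [mem_union_left _ (mem_componentIn_of_adj ha hv hav),
      mem_union_right _ (mem_componentIn_of_adj ha hv hav)]
  · obtain ⟨hvA, hv⟩ := mem_sdiff.1 hv
    exact hmem hvA (fun h => hv (mem_union_left _ (h ▸ hb)))
      fun h => hv (mem_union_right _ (h ▸ hc))

variable [Fintype W]

/-- Otherwise the component would also be a component of `H - w`. -/
theorem exists_adj_mem_componentIn_erase_erase {p w : W} (hpw : p ≠ w)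
    (hw : H.PreconnectedOn (univ.erase w)) (hz : z ∈ (univ.erase p).erase w) :
    ∃ b ∈ H.componentIn ((univ.erase p).erase w) z, H.Adj p b := by
  set K := H.componentIn ((univ.erase p).erase w) z
  by_contra! hno
  have hclosed : ∀ a ∈ K, ∀ b ∈ univ.erase w, H.Adj a b → b ∈ K := fun a ha b hb hab =>
    mem_componentIn_of_adj ha (mem_erase.2 ⟨(mem_erase.1 hb).1,
      mem_erase.2 ⟨fun hbp => hno a ha (hbp ▸ hab.symm), mem_univ b⟩⟩) hab
  have hpK := (hw z (mem_erase.2 ⟨(mem_erase.1 hz).1, mem_univ z⟩) p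
    (mem_erase.2 ⟨hpw, mem_univ p⟩)).mem_of_closed hclosed (self_mem_componentIn hz)
  exact (mem_erase.1 (mem_of_mem_erase (componentIn_subset hpK))).1 rfl

/-- Induction on the size of the component `K`: a cut vertex `u` of `H - p` in `K` leaves a
component of `H - p - u` strictly inside `K`. -/
theorem exists_adj_mem_componentIn_preconnectedOn_erase {p w : W}
    (h2 : ∀ u, H.PreconnectedOn (univ.erase u)) (hpw : p ≠ w) (hz : z ∈ (univ.erase p).erase w) :
    ∃ b ∈ H.componentIn ((univ.erase p).erase w) z, H.Adj p b ∧
      H.PreconnectedOn ((univ.erase p).erase b) := by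
  set A := univ.erase p
  have hA : H.PreconnectedOn A := h2 p
  induction hn : #(H.componentIn (A.erase w) z) using Nat.strong_induction_on
    generalizing w z with
  | _ n ih =>
  set K := H.componentIn (A.erase w) z
  by_cases hall : ∀ u ∈ K, H.PreconnectedOn (A.erase u)
  · obtain ⟨b, hb, hpb⟩ := exists_adj_mem_componentIn_erase_erase hpw (h2 w) hz
    exact ⟨b, hb, hpb, hall b hb⟩
  push Not at hall
  obtain ⟨u, huK, hu⟩ := hall
  obtain ⟨huw, huA⟩ := mem_erase.1 (componentIn_subset huK)
  have hwA : w ∈ A := mem_erase.2 ⟨hpw.symm, mem_univ w⟩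
  obtain ⟨z', hz', hz'w⟩ : ∃ z' ∈ A.erase u, ¬H.ReachableIn (A.erase u) z' w := by
    by_contra! hall
    exact hu (PreconnectedOn.of_forall_reachableIn hall)
  have hsub : H.componentIn (A.erase u) z' ⊆ K.erase u := by
    intro v hv
    obtain ⟨hvA, hz'v⟩ := mem_componentIn.1 hv
    refine mem_erase.2 ⟨(mem_erase.1 hvA).1, by_contra fun hvK => hz'w (hz'v.trans ?_)⟩
    refine (hA.reachableIn_sdiff hwA (fun a ha b hb hab => mem_componentIn_of_adj ha hb hab)
      (mem_of_mem_erase hvA) hvK).mono fun x hx => ?_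
    exact mem_erase.2 ⟨fun hxu => (mem_sdiff.1 hx).2 (hxu ▸ huK), (mem_sdiff.1 hx).1⟩
  obtain ⟨b, hb, hpb, hAb⟩ := ih _ (hn ▸ (card_le_card hsub).trans_lt (card_erase_lt_of_mem huK))
    (mem_erase.1 huA).1.symm hz' rfl
  exact ⟨b, mem_of_mem_erase (hsub hb), hpb, hAb⟩

/-- Lovász's lemma behind Brooks' theorem. If `H` is 3-connected, any induced path on three
vertices works. Otherwise some `H - p` has a cut vertex `q`, and `a = p` with neighbors `b`, `c`
taken from two components of `H - p - q` as in the previous lemma; the third neighbor of `p`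
keeps it attached to `H - b - c`. -/
theorem exists_adj_adj_preconnectedOn_erase_erase [DecidableRel H.Adj]
    (hconn : H.PreconnectedOn univ) (h2 : ∀ u, H.PreconnectedOn (univ.erase u))
    (hdeg : ∀ v, 3 ≤ H.degree v) (hxy : x ≠ y) (hnxy : ¬H.Adj x y) :
    ∃ a b c, H.Adj a b ∧ H.Adj a c ∧ b ≠ c ∧ ¬H.Adj b c ∧
      H.PreconnectedOn ((univ.erase b).erase c) := by
  by_cases h3 : ∀ p q, H.PreconnectedOn ((univ.erase p).erase q)
  · obtain ⟨a, -, b, -, c, -, hab, hac, hbc, hnbc⟩ :=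
      hconn.exists_adj_adj_not_adj (mem_univ x) (mem_univ y) hxy hnxy
    exact ⟨a, b, c, hab, hac, hbc, hnbc, h3 b c⟩
  push Not at h3
  obtain ⟨p, q, hpq⟩ := h3
  set A := univ.erase p
  have hqp : q ≠ p := by
    rintro rfl
    exact hpq (by rw [erase_idem]; exact h2 q)
  have hqA : q ∈ A := mem_erase.2 ⟨hqp, mem_univ q⟩
  obtain ⟨z, hz, z', hz', hzz'⟩ : ∃ z ∈ A.erase q, ∃ z' ∈ A.erase q,
      ¬H.ReachableIn (A.erase q) z z' := by
    simpa only [PreconnectedOn, not_forall, exists_prop] using hpq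
  obtain ⟨b, hbK, hpb, hAb⟩ := exists_adj_mem_componentIn_preconnectedOn_erase h2 hqp.symm hz
  obtain ⟨c, hcK, hpc, hAc⟩ := exists_adj_mem_componentIn_preconnectedOn_erase h2 hqp.symm hz'
  have hcK₁ : c ∉ H.componentIn (A.erase q) z := fun h =>
    hzz' (reachableIn_of_mem_componentIn_of_mem_componentIn h hcK)
  refine ⟨p, b, c, hpb, hpc, fun h => hcK₁ (h ▸ hbK),
    fun h => hcK₁ (mem_componentIn_of_adj hbK (componentIn_subset hcK) h), ?_⟩
  have hmemD : ∀ {t}, t ∈ (univ.erase b).erase c ↔ t ≠ c ∧ t ≠ b := by simp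
  have hreach : ∀ t ∈ A, t ≠ b → t ≠ c → H.ReachableIn ((univ.erase b).erase c) t q :=
    fun t ht htb htc => ((h2 p).reachableIn_erase_erase hqA hbK hcK hzz' hAb hAc ht htb htc).mono
      fun v hv => by simp only [mem_erase] at hv ⊢; tauto
  obtain ⟨a, ha, habc⟩ : ∃ a ∈ H.neighborFinset p, a ∉ ({b, c} : Finset W) :=
    exists_mem_notMem_of_card_lt_card ((card_le_two).trans_lt (hdeg p))
  have hpa : H.Adj p a := (mem_neighborFinset _ _ _).1 ha
  have hab : a ≠ b ∧ a ≠ c := by simpa using habc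
  refine PreconnectedOn.of_forall_reachableIn (w := q) fun t ht => ?_
  obtain ⟨htc, htb⟩ := hmemD.1 ht
  rcases eq_or_ne t p with rfl | htp
  · exact (ReachableIn.single hpa ht (hmemD.2 ⟨hab.2, hab.1⟩)).trans
      (hreach a (mem_erase.2 ⟨hpa.ne', mem_univ a⟩) hab.1 hab.2)
  · exact hreach t (mem_erase.2 ⟨htp, mem_univ t⟩) htb htc

end Lovasz

section Cycles

variable {α β : Type*} {A : SimpleGraph α} {B : SimpleGraph β} [Fintype α] [Fintype β]
  [DecidableRel A.Adj] [DecidableRel B.Adj]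

/-- The copy maps the neighborhood of `a` onto that of `f a`. -/
theorem Copy.adj_iff_of_degree_le (f : Copy A B) (h : ∀ a, B.degree (f a) ≤ A.degree a)
    {a a' : α} : B.Adj (f a) (f a') ↔ A.Adj a a' := by
  classical
  refine ⟨fun hadj => ?_, f.toHom.map_adj⟩
  have himage : (A.neighborFinset a).map f.toEmbedding = B.neighborFinset (f a) :=
    eq_of_subset_of_card_le (fun b hb => by
      obtain ⟨a'', ha'', rfl⟩ := mem_map.1 hb
      exact (mem_neighborFinset _ _ _).2 (f.toHom.map_adj ((mem_neighborFinset _ _ _).1 ha'')))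
      (by simpa using h a)
  obtain ⟨a'', ha'', hfa⟩ := mem_map.1 (himage ▸ (mem_neighborFinset _ _ _).2 hadj)
  exact f.injective hfa ▸ (mem_neighborFinset _ _ _).1 ha''

variable {W : Type*} [Fintype W] {H : SimpleGraph W} [DecidableRel H.Adj]

/-- The graph has a cycle through all its vertices, hence contains a copy of the cycle graph of
its order. -/
theorem Connected.exists_iso_cycleGraph (hconn : H.Connected) (hdeg : ∀ v, H.degree v = 2) :
    ∃ m, Fintype.card W = m + 3 ∧ Nonempty (H ≃g cycleGraph (m + 3)) := by
  classical
  have hcyc : H.IsCycles := fun v _ => by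
    rw [← Nat.card_coe_set_eq, Nat.card_eq_fintype_card, card_neighborSet_eq_degree, hdeg]
  obtain ⟨v⟩ := hconn.nonempty
  obtain ⟨p, hp, hverts⟩ := hcyc.exists_cycle_toSubgraph_verts_eq_connectedComponentSupp
    (c := H.connectedComponentMk v) rfl
    ((H.degree_pos_iff_exists_adj v).1 (by rw [hdeg]; norm_num))
  have htail : ∀ w, w ∈ p.support.tail := fun w => by
    have hw : w ∈ p.toSubgraph.verts :=
      hverts ▸ ConnectedComponent.eq.2 (hconn.preconnected w v)
    rcases p.mem_support_iff.1 (by simpa using hw) with rfl | h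
    exacts [p.end_mem_tail_support hp.not_nil, h]
  have hlen : p.length = Fintype.card W := by
    have := List.toFinset_card_of_nodup hp.support_nodup
    rw [eq_univ_of_forall fun w => List.mem_toFinset.2 (htail w), card_univ, List.length_tail,
      Walk.length_support] at this
    omega
  obtain ⟨m, hm⟩ : ∃ m, p.length = m + 3 := ⟨p.length - 3, by have := hp.three_le_length; omega⟩
  obtain ⟨f⟩ := (cycleGraph_isContained_iff (n := m + 3) (by omega)).2 ⟨v, p, hp, hm⟩
  have hbij : Function.Bijective f :=
    (Fintype.bijective_iff_injective_and_card f).2 ⟨f.injective, by simp [← hlen, hm]⟩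
  refine ⟨m, by omega, ⟨(RelIso.mk (Equiv.ofBijective f hbij) ?_).symm⟩⟩
  exact f.adj_iff_of_degree_le fun a => by rw [hdeg, cycleGraph_degree_three_le]

def cycleGraphIsoCycleGraphZ (n : ℕ) : cycleGraph (n + 2) ≃g cycleGraphZ (n + 2) where
  toEquiv := Equiv.refl _
  map_rel_iff' {u v} := by
    simp only [cycleGraphZ, fromRel_adj, cycleGraph_adj]
    constructor
    · rintro ⟨-, h | h⟩
      exacts [Or.inr (sub_eq_iff_eq_add'.2 h), Or.inl (sub_eq_iff_eq_add'.2 h)]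
    · rintro (h | h) <;> refine ⟨fun huv => ?_, ?_⟩
      · subst huv
        exact zero_ne_one ((sub_self u).symm.trans h)
      · exact Or.inr (sub_eq_iff_eq_add'.1 h)
      · subst huv
        exact zero_ne_one ((sub_self u).symm.trans h)
      · exact Or.inl (sub_eq_iff_eq_add'.1 h)

end Cycles

section Blocks

theorem Connected.numComponents_eq_one {V : Type} {G : SimpleGraph V} (h : G.Connected) :
    numComponents G = 1 :=
  Nat.card_eq_one_iff_unique.2
    ⟨h.preconnected.subsingleton_connectedComponent, ⟨G.connectedComponentMk h.nonempty.some⟩⟩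

theorem HasNoCutVertex.preconnected_induce_compl {W : Type} [Finite W] {H : SimpleGraph W}
    (hcut : HasNoCutVertex H) (hconn : H.Connected) (u : W) :
    (H.induce {u}ᶜ).Preconnected := by
  have hle : numComponents (H.induce {u}ᶜ) ≤ 1 := by
    have := hcut u
    rwa [IsSepVertexSet, hconn.numComponents_eq_one, not_lt] at this
  have : Subsingleton (H.induce {u}ᶜ).ConnectedComponent :=
    Finite.card_le_one_iff_subsingleton.1 hle
  exact fun a b => ConnectedComponent.exact (Subsingleton.elim _ _)

/-- Adding the missing edges of `G` between vertices of a block keeps it connected without cut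
vertex, so maximality makes a block an induced subgraph. -/
theorem IsBlock.isInduced {V : Type} [Finite V] {G : SimpleGraph V} {B : G.Subgraph}
    (hB : IsBlock G B) : B.IsInduced := by
  obtain ⟨hconn, hcut, hmax⟩ := hB
  set B' := (⊤ : G.Subgraph).induce B.verts
  have hle : B.coe ≤ B'.coe := fun _ _ hab => Subgraph.le_induce_top_verts.2 hab
  have hconn' : B'.coe.Connected := hconn.mono hle
  have hcut' : HasNoCutVertex B'.coe := fun v hv => hcut v <|
    calc numComponents B.coe = numComponents B'.coe := by
          rw [hconn.numComponents_eq_one, hconn'.numComponents_eq_one]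
      _ < numComponents (B'.coe.induce {v}ᶜ) := hv
      _ ≤ numComponents (B.coe.induce {v}ᶜ) :=
          ConnectedComponent.card_le_card_of_le fun _ _ hab => hle hab
  rw [← hmax B' Subgraph.le_induce_top_verts hconn' hcut']
  exact fun _ hv _ hw hvw => ⟨hv, hw, hvw⟩

end Blocks

section DegreeChoosable

variable {W : Type*} [Fintype W] [DecidableEq W] {H : SimpleGraph W} [DecidableRel H.Adj]

/-- Without cut vertices and with at least three vertices, `v` has a neighbor off any other
vertex `u`, hence two neighbors. -/
theorem two_le_degree_of_preconnectedOn_erase (h2 : ∀ u, H.PreconnectedOn (univ.erase u))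
    (hcard : 3 ≤ Fintype.card W) (v : W) : 2 ≤ H.degree v := by
  have hnbr : ∀ u, u ≠ v → ∃ a, a ≠ u ∧ H.Adj v a := fun u huv => by
    obtain ⟨w, -, hw⟩ := exists_mem_notMem_of_card_lt_card (s := {u, v}) (t := univ)
      (card_le_two.trans_lt (by rwa [card_univ]))
    have hwv : v ≠ w := fun h => hw (by simp [h])
    obtain ⟨a, ha, hva⟩ := (h2 u v (mem_erase.2 ⟨huv.symm, mem_univ v⟩) w
      (mem_erase.2 ⟨fun h => hw (by simp [h]), mem_univ w⟩)).exists_adj_of_ne hwv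
    exact ⟨a, (mem_erase.1 ha).1, hva⟩
  have : Nontrivial W := Fintype.one_lt_card_iff_nontrivial.1 (by omega)
  obtain ⟨u, hu⟩ := exists_ne v
  obtain ⟨a, -, hva⟩ := hnbr u hu
  obtain ⟨b, hba, hvb⟩ := hnbr a hva.ne'
  rw [← card_neighborFinset_eq_degree, ← card_pair hba]
  exact card_le_card fun x hx => by
    rcases mem_insert.1 hx with rfl | hx
    · simpa using hvb
    · simpa [mem_singleton.1 hx] using hva

end DegreeChoosable

/-- Brooks' theorem in list form. For `#A = 2` the graph is a cycle, colorable when even; for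
`#A ≥ 3` Lovász's lemma lets two nonadjacent neighbors of a vertex share a color, leaving that
vertex slack. -/
theorem exists_isListColoringOn_or_isOddCycle_of_forall_eq {W : Type} {α : Type*} [Fintype W]
    [DecidableEq W] [DecidableEq α] [Nonempty α] {H : SimpleGraph W} [DecidableRel H.Adj]
    {L : W → Finset α} {A : Finset α} (hconn : H.Connected)
    (h2 : ∀ u, H.PreconnectedOn (univ.erase u)) (hLA : ∀ v, L v = A)
    (hdeg : ∀ v, H.degree v = #A) {x y : W} (hxy : x ≠ y) (hnxy : ¬H.Adj x y) :
    (∃ c, H.IsListColoringOn univ L c) ∨ IsOddCycle H := by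
  have hS := hconn.preconnectedOn_univ
  have hcard : 3 ≤ Fintype.card W := by
    obtain ⟨a, -, hxa⟩ := (hS x (mem_univ x) y (mem_univ y)).exists_adj_of_ne hxy
    rw [← card_univ, ← card_eq_three.2 ⟨x, a, y, hxa.ne, hxy, fun h => hnxy (h ▸ hxa), rfl⟩]
    exact card_le_univ _
  rcases (hdeg x ▸ two_le_degree_of_preconnectedOn_erase h2 hcard x).eq_or_lt with h | h
  · obtain ⟨m, -, ⟨e⟩⟩ := hconn.exists_iso_cycleGraph fun v => (hdeg v).trans h.symm
    rcases Nat.even_or_odd (m + 3) with heven | hodd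
    · obtain ⟨a, b, hab, hL₀⟩ := card_eq_two.1 h.symm
      set col := cycleGraph.bicoloring_of_even (m + 3) heven
      have hinj : Function.Injective fun t : Bool => if t then a else b := fun t t' => by
        cases t <;> cases t' <;> simp [hab, Ne.symm hab]
      refine Or.inl ⟨fun v => if col (e v) then a else b, fun v _ => by
        rw [hLA, hL₀]; dsimp only; split_ifs <;> simp, fun v _ w _ hvw => ?_⟩
      exact hinj.ne (col.valid (e.map_adj_iff.2 hvw))
    · exact Or.inr ⟨m + 3, hodd, by omega, ⟨e.trans (cycleGraphIsoCycleGraphZ (m + 1))⟩⟩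
  · obtain ⟨a, b, c, hab, hac, hbc, hnbc, hD⟩ :=
      exists_adj_adj_preconnectedOn_erase_erase hS h2 (fun v => hdeg v ▸ h) hxy hnxy
    obtain ⟨α₀, hα₀⟩ := card_pos.1 (by omega : 0 < #A)
    exact Or.inl (exists_isListColoringOn_of_adj_of_adj hD (mem_univ a) (mem_univ b) (mem_univ c)
      hab hac hnbc hbc (hLA b ▸ hα₀) (hLA c ▸ hα₀) fun t _ => by rw [degreeIn_univ, hdeg, hLA])

/-- Degree-choosability of blocks (Erdős–Rubin–Taylor, Borodin). A vertex whose list exceeds its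
degree, or an edge `uv` with a color of `u` missing at `v`, lets the greedy coloring through;
otherwise all lists are equal, and Brooks' theorem applies. -/
theorem exists_isListColoringOn_or_eq_top_or_isOddCycle {W : Type} {α : Type*} [Fintype W]
    [DecidableEq W] [DecidableEq α] [Nonempty α] {H : SimpleGraph W} [DecidableRel H.Adj]
    (hconn : H.Connected) (hcut : HasNoCutVertex H) (L : W → Finset α)
    (hL : ∀ v, H.degree v ≤ #(L v)) :
    (∃ c, H.IsListColoringOn univ L c) ∨ H = ⊤ ∨ IsOddCycle H := by
  have hS := hconn.preconnectedOn_univ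
  have h2 : ∀ u, H.PreconnectedOn (univ.erase u) := fun u =>
    preconnectedOn_univ_erase (hcut.preconnected_induce_compl hconn u)
  simp only [← degreeIn_univ] at hL
  by_cases hslack : ∃ r, H.degreeIn univ r < #(L r)
  · obtain ⟨r, hr⟩ := hslack
    exact Or.inl (exists_isListColoringOn_of_degreeIn_lt hS (mem_univ r) (fun v _ => hL v) hr)
  by_cases hdiff : ∃ u v, H.Adj u v ∧ ¬L u ⊆ L v
  · obtain ⟨u, v, huv, huv'⟩ := hdiff
    obtain ⟨a, hau, hav⟩ := not_subset.1 huv'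
    exact Or.inl (exists_isListColoringOn_of_adj_of_notMem (h2 u) (mem_univ u) (mem_univ v) huv
      hau hav fun t _ => hL t)
  push Not at hslack hdiff
  obtain ⟨v₀⟩ := hconn.nonempty
  have hLeq : ∀ v, L v = L v₀ := fun v => by
    induction hS v₀ (mem_univ _) v (mem_univ _) with
    | refl => rfl
    | tail _ hbc ih => exact (subset_antisymm (hdiff _ _ hbc.1.symm) (hdiff _ _ hbc.1)).trans ih
  have hdeg : ∀ v, H.degree v = #(L v₀) := fun v => by
    rw [← degreeIn_univ, ← hLeq v]
    exact (hL v).antisymm (hslack v)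
  by_cases htop : H = ⊤
  · exact Or.inr (Or.inl htop)
  obtain ⟨x, y, hxy, hnxy⟩ : ∃ x y, x ≠ y ∧ ¬H.Adj x y := by
    by_contra! h
    exact htop (by ext x y; exact ⟨fun hxy => hxy.ne, h x y⟩)
  exact (exists_isListColoringOn_or_isOddCycle_of_forall_eq hconn h2 hLeq hdeg hxy hnxy).imp_right
    Or.inr

section Critical

variable {V : Type} {G : SimpleGraph V} {k : ℕ}

theorem IsCritical.colorable_induce_compl (hcrit : IsCritical G)
    (hchi : G.chromaticNumber = (↑(k + 1) : ℕ∞)) {S : Set V} (hS : S.Nonempty) :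
    (G.induce Sᶜ).Colorable k := by
  set G' := (⊤ : G.Subgraph).induce Sᶜ
  have hG' : G' ≠ ⊤ := fun h => by
    obtain ⟨v, hv⟩ := hS
    exact (show v ∈ G'.verts from h ▸ Set.mem_univ v) hv
  have hlt := hcrit G' hG'
  rw [hchi, Nat.cast_succ, ENat.lt_add_one_iff (ENat.natCast_ne_top k),
    chromaticNumber_le_iff_colorable] at hlt
  exact hlt.of_hom (⟨id, fun {a b} hab => ⟨a.2, b.2, hab⟩⟩ : G.induce Sᶜ →g G'.coe)

variable [Fintype V] [DecidableRel G.Adj]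

theorem Embedding.degree_add_card_filter_notMem_range {W : Type*} [Fintype W] {H : SimpleGraph W}
    [DecidableRel H.Adj] (f : H ↪g G) [DecidablePred (· ∈ Set.range f)] (w : W) :
    H.degree w + #{u ∈ G.neighborFinset (f w) | u ∉ Set.range f} = G.degree (f w) := by
  have himage : {u ∈ G.neighborFinset (f w) | u ∈ Set.range f} =
      (H.neighborFinset w).map f.toEmbedding := by
    ext u
    simp only [mem_map, mem_neighborFinset, mem_filter, Set.mem_range]
    constructor
    · rintro ⟨hu, a, rfl⟩
      exact ⟨a, f.map_adj_iff.1 hu, rfl⟩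
    · rintro ⟨a, ha, rfl⟩
      exact ⟨f.map_adj_iff.2 ha, a, rfl⟩
  rw [← card_neighborFinset_eq_degree, ← card_neighborFinset_eq_degree, ← card_map f.toEmbedding,
    ← himage, card_filter_add_card_filter_not]

/-- The lists left on a copy of `H` by a coloring `φ` of `G` off the copy with colors `< k`. -/
def Embedding.listsOff {W : Type*} {H : SimpleGraph W} (f : H ↪g G)
    [DecidablePred (· ∈ Set.range f)] (k : ℕ) (φ : V → ℕ) (w : W) : Finset ℕ :=
  range k \ {u ∈ G.neighborFinset (f w) | u ∉ Set.range f}.image φ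

theorem Embedding.degree_add_le_card_listsOff {W : Type*} [Fintype W] {H : SimpleGraph W}
    [DecidableRel H.Adj] (f : H ↪g G) [DecidablePred (· ∈ Set.range f)] (φ : V → ℕ) (w : W) :
    H.degree w + k ≤ #(f.listsOff k φ w) + G.degree (f w) := by
  have := f.degree_add_card_filter_notMem_range w
  have := le_card_sdiff ({u ∈ G.neighborFinset (f w) | u ∉ Set.range f}.image φ) (range k)
  have := card_image_le (s := {u ∈ G.neighborFinset (f w) | u ∉ Set.range f}) (f := φ)
  rw [card_range] at *
  unfold listsOff
  omega

theorem Embedding.colorable_of_isListColoringOn_listsOff {W : Type*} [Fintype W]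
    {H : SimpleGraph W} (f : H ↪g G) [DecidablePred (· ∈ Set.range f)] {φ : V → ℕ}
    (hφk : ∀ v ∉ Set.range f, φ v < k)
    (hφ : ∀ u v, u ∉ Set.range f → v ∉ Set.range f → G.Adj u v → φ u ≠ φ v) {c : W → ℕ}
    (hc : H.IsListColoringOn univ (f.listsOff k φ) c) : G.Colorable k := by
  have hcL : ∀ a, c a ∈ f.listsOff k φ a := fun a => hc.1 a (mem_univ a)
  have hout : ∀ a, ∀ v ∉ Set.range f, G.Adj (f a) v → c a ≠ φ v := fun a v hv hav h =>
    (mem_sdiff.1 (hcL a)).2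
      (mem_image.2 ⟨v, mem_filter.2 ⟨(mem_neighborFinset _ _ _).2 hav, hv⟩, h.symm⟩)
  have hlt : ∀ v, Function.extend f c φ v < k := fun v => by
    by_cases hv : v ∈ Set.range f
    · obtain ⟨a, rfl⟩ := hv
      rw [f.injective.extend_apply]
      exact mem_range.1 (mem_sdiff.1 (hcL a)).1
    · rw [Function.extend_apply' _ _ _ hv]
      exact hφk v hv
  refine ⟨Coloring.mk (fun v => ⟨_, hlt v⟩) fun {u v} huv h => ?_⟩
  replace h : Function.extend f c φ u = Function.extend f c φ v := congrArg Fin.val h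
  by_cases hu : u ∈ Set.range f <;> by_cases hv : v ∈ Set.range f
  · obtain ⟨a, rfl⟩ := hu
    obtain ⟨b, rfl⟩ := hv
    rw [f.injective.extend_apply, f.injective.extend_apply] at h
    exact hc.2 a (mem_univ a) b (mem_univ b) (f.map_adj_iff.1 huv) h
  · obtain ⟨a, rfl⟩ := hu
    rw [f.injective.extend_apply, Function.extend_apply' _ _ _ hv] at h
    exact hout a v hv huv h
  · obtain ⟨b, rfl⟩ := hv
    rw [f.injective.extend_apply, Function.extend_apply' _ _ _ hu] at h
    exact hout b u hu huv.symm h.symm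
  · rw [Function.extend_apply' _ _ _ hu, Function.extend_apply' _ _ _ hv] at h
    exact hφ u v hu hv huv h

/-- Criticality in list form (Gallai): `k`-color `G` off the copy of `H`; a list coloring of `H`
from the lists left by it would complete a `k`-coloring of `G`. -/
theorem IsCritical.exists_lists_not_isListColoringOn (hcrit : IsCritical G)
    (hchi : G.chromaticNumber = (↑(k + 1) : ℕ∞)) {W : Type*} [Fintype W] [Nonempty W]
    {H : SimpleGraph W} [DecidableRel H.Adj] (f : H ↪g G) :
    ∃ L : W → Finset ℕ, (∀ w, H.degree w + k ≤ #(L w) + G.degree (f w)) ∧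
      ¬∃ c, H.IsListColoringOn univ L c := by
  classical
  obtain ⟨φ⟩ := hcrit.colorable_induce_compl hchi (Set.range_nonempty f)
  let φ' : V → ℕ := fun v => if h : v ∈ (Set.range f)ᶜ then φ ⟨v, h⟩ else 0
  have hφ' : ∀ u (hu : u ∉ Set.range f), φ' u = φ ⟨u, hu⟩ := fun u hu => dif_pos hu
  refine ⟨f.listsOff k φ', f.degree_add_le_card_listsOff φ', fun ⟨c, hc⟩ => ?_⟩
  have hle := (f.colorable_of_isListColoringOn_listsOff (fun v hv => hφ' v hv ▸ Fin.is_lt _)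
    (fun u v hu hv huv h => φ.valid (show (G.induce _).Adj ⟨u, hu⟩ ⟨v, hv⟩ from huv)
      (Fin.ext (hφ' u hu ▸ hφ' v hv ▸ h))) hc).chromaticNumber_le
  rw [hchi, Nat.cast_le] at hle
  omega

end Critical

end SimpleGraph

theorem gallai_low_vertex_blocks_general {V : Type} [Fintype V] (G : SimpleGraph V)
    [DecidableRel G.Adj] (k : ℕ)
    (hcrit : IsCritical G) (hchi : G.chromaticNumber = (↑(k + 1) : ℕ∞)) :
    ∀ B : (G.induce {v : V | G.degree v = k}).Subgraph,
      IsBlock (G.induce {v : V | G.degree v = k}) B →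
      (∃ n : ℕ, IsCompleteOfOrder B.coe n) ∨ IsOddCycle B.coe := by
  classical
  intro B hB
  let f : B.coe ↪g G :=
    (Embedding.induce _).comp ⟨⟨Subtype.val, Subtype.val_injective⟩, hB.isInduced.adj.symm⟩
  have : Nonempty B.verts := hB.1.nonempty
  obtain ⟨L, hL, hnot⟩ := hcrit.exists_lists_not_isListColoringOn hchi f
  have hlow : ∀ w, G.degree (f w) = k := fun w => w.1.2
  rcases exists_isListColoringOn_or_eq_top_or_isOddCycle hB.1 hB.2.1 L
    (fun w => by have := hL w; have := hlow w; omega) with hc | htop | hodd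
  · exact absurd hc hnot
  · exact Or.inl ⟨_, rfl, fun v w hvw => by rw [htop]; exact hvw⟩
  · exact Or.inr hodd

/-- (Gallai) In a critical graph with chromatic number `k+1`
(`k ≥ 1`), every block of the low-vertex subgraph (induced by vertices of
degree `k`) is complete or an odd cycle. -/
theorem gallai_low_vertex_blocks {V : Type} [Fintype V] (G : SimpleGraph V)
    [DecidableRel G.Adj] (k : ℕ) (hk : 1 ≤ k)
    (hcrit : IsCritical G) (hchi : G.chromaticNumber = (↑(k + 1) : ℕ∞)) :
    ∀ B : (G.induce {v : V | G.degree v = k}).Subgraph,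
      IsBlock (G.induce {v : V | G.degree v = k}) B →
      (∃ n : ℕ, IsCompleteOfOrder B.coe n) ∨ IsOddCycle B.coe :=
  gallai_low_vertex_blocks_general G k hcrit hchi
end

section
/- Let G = G₁ △ G₂ be the Hajós join of two graphs G₁ and G₂, and let k ≥ 3 be an integer. Then G is critical with chromatic number k+1 if and only if both G₁ and G₂ are critical with chromatic number k+1. -/
open SimpleGraph

/-!
In every `k`-colouring of `G₁ - v₁w₁` the ends `v₁`, `w₁` get the same colour, as `G₁` is not
`k`-colourable; likewise for `G₂ - v₂w₂`. So a `k`-colouring of the join would give the adjacent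
vertices `w₁`, `w₂` both the colour of the identified vertex. Conversely, `k`-colourings of the two
sides, with colours permuted to agree at the identified vertex, glue to a `k`-colouring of the join
minus any one of its edges.

Back from the join: a `k`-colouring of the join minus `w₁w₂` restricts to `k`-colourings of
`G₁ - v₁w₁` and `G₂ - v₂w₂`, and a `k`-colouring of `G₁` would glue with one of `G₂ - v₂w₂` to a
`k`-colouring of the join, since with at least three colours a permutation makes the two agree at
the identified vertex while giving `w₁` and `w₂` different colours.
-/

theorem Equiv.Perm.exists_apply_eq_and_apply_ne {α : Type*} (hα : 3 ≤ ENat.card α) {a c : α}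
    (hac : a ≠ c) (b d : α) : ∃ σ : Equiv.Perm α, σ a = b ∧ σ c ≠ d := by
  classical
  obtain ⟨t, htb, htd⟩ := ENat.exists_ne_ne_of_three_le hα b d
  have hc : Equiv.swap a b c ≠ b := by
    simpa using (Equiv.swap a b).injective.ne hac.symm
  refine ⟨Equiv.swap (Equiv.swap a b c) t * Equiv.swap a b, ?_, ?_⟩
  · simp [Equiv.swap_apply_of_ne_of_ne hc.symm htb.symm]
  · simpa using htd

namespace SimpleGraph

section Coloring

variable {V α : Type*} {G : SimpleGraph V} {v w : V} {k : ℕ}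

def Coloring.ofDeleteEdge (c : (G.deleteEdges {s(v, w)}).Coloring α) (h : c v ≠ c w) :
    G.Coloring α :=
  Coloring.mk c fun {a b} hab => by
    by_cases he : s(a, b) = s(v, w)
    · rcases Sym2.eq_iff.1 he with ⟨rfl, rfl⟩ | ⟨rfl, rfl⟩
      exacts [h, h.symm]
    · exact c.valid (by simp [hab, he])

theorem Coloring.apply_eq_of_not_colorable (c : (G.deleteEdges {s(v, w)}).Coloring (Fin k))
    (hG : ¬ G.Colorable k) : c v = c w :=
  not_not.1 fun h => hG ⟨c.ofDeleteEdge h⟩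

theorem colorable_succ_of_colorable_deleteEdges (h : (G.deleteEdges {s(v, w)}).Colorable k) :
    G.Colorable (k + 1) := by
  classical
  obtain ⟨c⟩ := h
  refine ⟨Coloring.mk (Function.update (Fin.castSucc ∘ c) w (Fin.last k)) fun {a b} hab => ?_⟩
  by_cases ha : a = w <;> by_cases hb : b = w
  · exact absurd (ha.trans hb.symm) hab.ne
  · simpa [ha, hb] using (Fin.castSucc_ne_last (c b)).symm
  · simp [ha, hb]
  · have he : s(a, b) ≠ s(v, w) := fun he => by
      have := he ▸ Sym2.mem_mk_right v w
      simp_all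
    simpa [ha, hb] using c.valid (by simp [hab, he])

theorem chromaticNumber_lt_natCast_succ_iff :
    G.chromaticNumber < (k + 1 : ℕ) ↔ G.Colorable k := by
  rw [Nat.cast_succ, ENat.lt_add_one_iff (ENat.natCast_ne_top k), chromaticNumber_le_iff_colorable]

theorem edge_adj_of_ne {a b : V} (hvw : v ≠ w) :
    (edge v w).Adj a b ↔ a = v ∧ b = w ∨ a = w ∧ b = v := by
  rw [edge_adj, and_iff_left_of_imp]
  rintro (⟨rfl, rfl⟩ | ⟨rfl, rfl⟩)
  exacts [hvw, hvw.symm]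

end Coloring

/-- `G` is `(k + 1)`-critical. -/
structure IsColorCritical {V : Type*} (G : SimpleGraph V) (k : ℕ) : Prop where
  not_colorable : ¬ G.Colorable k
  exists_adj : ∀ v, ∃ w, G.Adj v w
  colorable_deleteEdges : ∀ ⦃v w⦄, G.Adj v w → (G.deleteEdges {s(v, w)}).Colorable k

namespace IsColorCritical

variable {V : Type*} {G : SimpleGraph V} {k : ℕ}

theorem exists_adj_ne (hG : G.IsColorCritical k) (hk : 2 ≤ k) (v u : V) :
    ∃ w, w ≠ u ∧ G.Adj v w := by
  classical
  by_contra! hv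
  obtain ⟨w, hvw⟩ := hG.exists_adj v
  obtain rfl : w = u := by_contra fun h => hv w h hvw
  obtain ⟨c⟩ := hG.colorable_deleteEdges hvw
  have : Nontrivial (Fin k) := Fin.nontrivial_iff_two_le.2 hk
  obtain ⟨t, ht⟩ := exists_ne (c w)
  refine hG.not_colorable ⟨Coloring.ofDeleteEdge (v := v) (w := w)
    (Coloring.mk (Function.update c v t) fun {a b} hab => ?_) ?_⟩
  · have hv' : ∀ b, ¬ (G.deleteEdges {s(v, w)}).Adj v b := fun b hb => by
      by_cases hbw : b = w
      · simp [hbw] at hb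
      · exact hv b hbw (deleteEdges_adj.1 hb).1
    have ha : a ≠ v := by rintro rfl; exact hv' b hab
    have hb : b ≠ v := by rintro rfl; exact hv' a hab.symm
    simpa [ha, hb] using c.valid hab
  · show Function.update c v t v ≠ Function.update c v t w
    simpa [hvw.ne'] using ht

theorem chromaticNumber_eq (hG : G.IsColorCritical k) : G.chromaticNumber = (k + 1 : ℕ) := by
  obtain ⟨v⟩ : Nonempty V := not_isEmpty_iff.1 fun _ => hG.not_colorable (.of_isEmpty k)
  obtain ⟨w, hvw⟩ := hG.exists_adj v
  rw [Nat.cast_succ, chromaticNumber_eq_iff_colorable_not_colorable]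
  exact ⟨colorable_succ_of_colorable_deleteEdges (hG.colorable_deleteEdges hvw), hG.not_colorable⟩

end IsColorCritical

section Critical

variable {V : Type} {G : SimpleGraph V} {k : ℕ}

theorem IsColorCritical.isCritical (hG : G.IsColorCritical k) : IsCritical G := by
  intro H hH
  obtain ⟨x, y, hxy, hHxy⟩ : ∃ x y, G.Adj x y ∧ ¬ H.Adj x y := by
    by_contra! hall
    refine hH (Subgraph.ext (Set.eq_univ_of_forall fun v => ?_) ?_)
    · obtain ⟨w, hvw⟩ := hG.exists_adj v
      exact (hall v w hvw).fst_mem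
    · ext a b
      exact ⟨fun h => h.adj_sub, fun h => hall a b h⟩
  have hcol : H.coe.Colorable k := (hG.colorable_deleteEdges hxy).of_hom
    ⟨fun a => a.1, fun {a b} hab => by
      refine deleteEdges_adj.2 ⟨hab.adj_sub, fun he => hHxy ?_⟩
      exact (H.adj_congr_of_sym2 (Set.mem_singleton_iff.1 he)).1 hab⟩
  rw [hG.chromaticNumber_eq]
  exact chromaticNumber_lt_natCast_succ_iff.2 hcol

theorem _root_.IsCritical.colorable_of_ne_top (hG : IsCritical G)
    (hχ : G.chromaticNumber = (k + 1 : ℕ)) {H : G.Subgraph} (hH : H ≠ ⊤) : H.coe.Colorable k :=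
  chromaticNumber_lt_natCast_succ_iff.1 (hχ ▸ hG H hH)

theorem _root_.IsCritical.isColorCritical (hk : 1 ≤ k) (hG : IsCritical G)
    (hχ : G.chromaticNumber = (k + 1 : ℕ)) : G.IsColorCritical k := by
  have hnot : ¬ G.Colorable k :=
    (chromaticNumber_eq_iff_colorable_not_colorable.1 (by simpa using hχ)).2
  refine ⟨hnot, fun v => ?_, fun x y hxy => ?_⟩
  · classical
    by_contra! hv
    have hH : (⊤ : G.Subgraph).deleteVerts {v} ≠ ⊤ := fun h => by
      simpa using congrArg (v ∈ ·.verts) h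
    obtain ⟨c⟩ := hG.colorable_of_ne_top hχ hH
    refine hnot ⟨Coloring.mk (fun a => if ha : a = v then ⟨0, hk⟩ else c ⟨a, by simp [ha]⟩)
      fun {a b} hab => ?_⟩
    have ha : a ≠ v := by rintro rfl; exact hv b hab
    have hb : b ≠ v := by rintro rfl; exact hv a hab.symm
    simpa [ha, hb] using c.valid (v := ⟨a, by simp [ha]⟩) (w := ⟨b, by simp [hb]⟩) (by simp [*])
  · have hH : (⊤ : G.Subgraph).deleteEdges {s(x, y)} ≠ ⊤ := fun h => by
      simpa [hxy] using congrArg (·.Adj x y) h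
    exact (hG.colorable_of_ne_top hχ hH).of_hom
      ⟨fun a => ⟨a, trivial⟩, fun {a b} hab => by
        change ((⊤ : G.Subgraph).deleteEdges {s(x, y)}).Adj a b
        simpa using hab⟩

theorem isCritical_and_chromaticNumber_eq_iff (hk : 1 ≤ k) :
    IsCritical G ∧ G.chromaticNumber = (k + 1 : ℕ) ↔ G.IsColorCritical k :=
  ⟨fun h => h.1.isColorCritical hk h.2, fun h => ⟨h.isCritical, h.chromaticNumber_eq⟩⟩

end Critical

/-- `G` is the Hajós join of `G₁` and `G₂` at the edges `v₁w₁` and `v₂w₂`, with the two sides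
embedded by `f₁` and `f₂`, which overlap only in the identified vertex `f₁ v₁ = f₂ v₂`. -/
structure IsHajosJoinAlong {W V₁ V₂ : Type*} (G : SimpleGraph W) (G₁ : SimpleGraph V₁)
    (G₂ : SimpleGraph V₂) (v₁ w₁ : V₁) (v₂ w₂ : V₂) (f₁ : V₁ ↪ W) (f₂ : V₂ ↪ W) : Prop where
  adj_left : G₁.Adj v₁ w₁
  adj_right : G₂.Adj v₂ w₂
  apply_eq_apply_iff : ∀ x y, f₁ x = f₂ y ↔ x = v₁ ∧ y = v₂
  range_union_range : Set.range f₁ ∪ Set.range f₂ = Set.univ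
  eq_sup : G = (G₁.deleteEdges {s(v₁, w₁)}).map f₁ ⊔ (G₂.deleteEdges {s(v₂, w₂)}).map f₂ ⊔
    edge (f₁ w₁) (f₂ w₂)

namespace IsHajosJoinAlong

variable {W V₁ V₂ α : Type*} {k : ℕ} {G : SimpleGraph W} {G₁ : SimpleGraph V₁}
  {G₂ : SimpleGraph V₂} {v₁ w₁ : V₁} {v₂ w₂ : V₂} {f₁ : V₁ ↪ W} {f₂ : V₂ ↪ W}

theorem symm (h : IsHajosJoinAlong G G₁ G₂ v₁ w₁ v₂ w₂ f₁ f₂) :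
    IsHajosJoinAlong G G₂ G₁ v₂ w₂ v₁ w₁ f₂ f₁ where
  adj_left := h.adj_right
  adj_right := h.adj_left
  apply_eq_apply_iff y x := by rw [eq_comm, h.apply_eq_apply_iff, and_comm]
  range_union_range := by rw [Set.union_comm, h.range_union_range]
  eq_sup := by rw [h.eq_sup, sup_comm ((G₁.deleteEdges _).map f₁), edge_comm]

theorem apply_left_eq_apply_right (h : IsHajosJoinAlong G G₁ G₂ v₁ w₁ v₂ w₂ f₁ f₂) :
    f₁ v₁ = f₂ v₂ :=
  (h.apply_eq_apply_iff v₁ v₂).2 ⟨rfl, rfl⟩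

theorem apply_left_ne_apply_right (h : IsHajosJoinAlong G G₁ G₂ v₁ w₁ v₂ w₂ f₁ f₂) (x : V₁)
    {y : V₂} (hy : y ≠ v₂) : f₁ x ≠ f₂ y :=
  fun hxy => hy ((h.apply_eq_apply_iff x y).1 hxy).2

theorem adj_iff (h : IsHajosJoinAlong G G₁ G₂ v₁ w₁ v₂ w₂ f₁ f₂) {a b : W} :
    G.Adj a b ↔
      (∃ x y, (G₁.deleteEdges {s(v₁, w₁)}).Adj x y ∧ f₁ x = a ∧ f₁ y = b) ∨
      (∃ x y, (G₂.deleteEdges {s(v₂, w₂)}).Adj x y ∧ f₂ x = a ∧ f₂ y = b) ∨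
      (a = f₁ w₁ ∧ b = f₂ w₂) ∨ (a = f₂ w₂ ∧ b = f₁ w₁) := by
  rw [h.eq_sup]
  simp only [sup_adj, map_adj, edge_adj_of_ne (h.apply_left_ne_apply_right w₁ h.adj_right.ne'),
    or_assoc]

theorem adj_apply_left (h : IsHajosJoinAlong G G₁ G₂ v₁ w₁ v₂ w₂ f₁ f₂) {x y : V₁}
    (hxy : (G₁.deleteEdges {s(v₁, w₁)}).Adj x y) : G.Adj (f₁ x) (f₁ y) :=
  h.adj_iff.2 (Or.inl ⟨x, y, hxy, rfl, rfl⟩)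

theorem adj_w₁_w₂ (h : IsHajosJoinAlong G G₁ G₂ v₁ w₁ v₂ w₂ f₁ f₂) : G.Adj (f₁ w₁) (f₂ w₂) :=
  h.adj_iff.2 (Or.inr (Or.inr (Or.inl ⟨rfl, rfl⟩)))

theorem mk_apply_left_ne_mk_w₁_w₂ (h : IsHajosJoinAlong G G₁ G₂ v₁ w₁ v₂ w₂ f₁ f₂) (x y : V₁) :
    s(f₁ x, f₁ y) ≠ s(f₁ w₁, f₂ w₂) := by
  simp [h.apply_left_ne_apply_right _ h.adj_right.ne']

theorem mk_apply_right_ne_mk_apply_left (h : IsHajosJoinAlong G G₁ G₂ v₁ w₁ v₂ w₂ f₁ f₂)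
    {a b : V₂} (hab : a ≠ b) (x y : V₁) : s(f₂ a, f₂ b) ≠ s(f₁ x, f₁ y) := by
  simp only [ne_eq, Sym2.eq_iff, eq_comm (a := f₂ _), h.apply_eq_apply_iff]
  grind

theorem exists_extend (h : IsHajosJoinAlong G G₁ G₂ v₁ w₁ v₂ w₂ f₁ f₂) {c₁ : V₁ → α}
    {c₂ : V₂ → α} (hv : c₁ v₁ = c₂ v₂) :
    ∃ c : W → α, (∀ x, c (f₁ x) = c₁ x) ∧ ∀ y, c (f₂ y) = c₂ y := by
  classical
  refine ⟨Function.extend f₁ c₁ (Function.extend f₂ c₂ fun _ => c₁ v₁),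
    f₁.injective.extend_apply _ _, fun y => ?_⟩
  by_cases hy : ∃ x, f₁ x = f₂ y
  · obtain ⟨x, hx⟩ := hy
    obtain ⟨rfl, rfl⟩ := (h.apply_eq_apply_iff x y).1 hx
    rw [← hx, f₁.injective.extend_apply, hv]
  · rw [Function.extend_apply' _ _ _ hy, f₂.injective.extend_apply]

theorem nonempty_coloring_deleteEdges (h : IsHajosJoinAlong G G₁ G₂ v₁ w₁ v₂ w₂ f₁ f₂)
    {E : Set (Sym2 W)} {c₁ : V₁ → α} {c₂ : V₂ → α} (hv : c₁ v₁ = c₂ v₂)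
    (hc₁ : ∀ ⦃x y⦄, (G₁.deleteEdges {s(v₁, w₁)}).Adj x y → s(f₁ x, f₁ y) ∉ E → c₁ x ≠ c₁ y)
    (hc₂ : ∀ ⦃x y⦄, (G₂.deleteEdges {s(v₂, w₂)}).Adj x y → s(f₂ x, f₂ y) ∉ E → c₂ x ≠ c₂ y)
    (hw : s(f₁ w₁, f₂ w₂) ∉ E → c₁ w₁ ≠ c₂ w₂) : Nonempty ((G.deleteEdges E).Coloring α) := by
  obtain ⟨c, hcc₁, hcc₂⟩ := h.exists_extend hv
  refine ⟨Coloring.mk c fun {a b} hab => ?_⟩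
  obtain ⟨hab, hE⟩ := deleteEdges_adj.1 hab
  rcases h.adj_iff.1 hab with ⟨x, y, hxy, rfl, rfl⟩ | ⟨x, y, hxy, rfl, rfl⟩ | ⟨rfl, rfl⟩ |
    ⟨rfl, rfl⟩
  · simpa [hcc₁] using hc₁ hxy hE
  · simpa [hcc₂] using hc₂ hxy hE
  · simpa [hcc₁, hcc₂] using hw hE
  · simpa [hcc₁, hcc₂] using (hw (by rwa [Sym2.eq_swap])).symm

theorem not_colorable (h : IsHajosJoinAlong G G₁ G₂ v₁ w₁ v₂ w₂ f₁ f₂)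
    (h₁ : ¬ G₁.Colorable k) (h₂ : ¬ G₂.Colorable k) : ¬ G.Colorable k := by
  rintro ⟨c⟩
  have e₁ : c (f₁ v₁) = c (f₁ w₁) :=
    Coloring.apply_eq_of_not_colorable (c.comp ⟨f₁, h.adj_apply_left⟩) h₁
  have e₂ : c (f₂ v₂) = c (f₂ w₂) :=
    Coloring.apply_eq_of_not_colorable (c.comp ⟨f₂, h.symm.adj_apply_left⟩) h₂
  exact c.valid h.adj_w₁_w₂ (by rw [← e₁, h.apply_left_eq_apply_right, e₂])

theorem colorable_deleteEdges_w₁_w₂ (h : IsHajosJoinAlong G G₁ G₂ v₁ w₁ v₂ w₂ f₁ f₂)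
    (h₁ : (G₁.deleteEdges {s(v₁, w₁)}).Colorable k)
    (h₂ : (G₂.deleteEdges {s(v₂, w₂)}).Colorable k) :
    (G.deleteEdges {s(f₁ w₁, f₂ w₂)}).Colorable k := by
  obtain ⟨c₁⟩ := h₁
  obtain ⟨c₂⟩ := h₂
  let σ := Equiv.swap (c₁ v₁) (c₂ v₂)
  exact h.nonempty_coloring_deleteEdges (c₁ := σ ∘ c₁) (Equiv.swap_apply_left _ _)
    (fun _ _ hxy _ => σ.injective.ne (c₁.valid hxy)) (fun _ _ hxy _ => c₂.valid hxy)
    (fun hE => absurd rfl hE)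

theorem colorable_deleteEdges_apply_left (h : IsHajosJoinAlong G G₁ G₂ v₁ w₁ v₂ w₂ f₁ f₂)
    {x y : V₁} (hxy : (G₁.deleteEdges {s(v₁, w₁)}).Adj x y)
    (h₁ : (G₁.deleteEdges {s(x, y)}).Colorable k) (h₂ : ¬ G₂.Colorable k)
    (h₂' : (G₂.deleteEdges {s(v₂, w₂)}).Colorable k) :
    (G.deleteEdges {s(f₁ x, f₁ y)}).Colorable k := by
  obtain ⟨c₁⟩ := h₁
  obtain ⟨c₂⟩ := h₂'
  have hne : s(x, y) ≠ s(v₁, w₁) := (deleteEdges_adj.1 hxy).2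
  have hc₁ : c₁ v₁ ≠ c₁ w₁ := c₁.valid (deleteEdges_adj.2 ⟨h.adj_left, hne.symm⟩)
  have hc₂ : c₂ v₂ = c₂ w₂ := c₂.apply_eq_of_not_colorable h₂
  let σ := Equiv.swap (c₁ v₁) (c₂ v₂)
  refine h.nonempty_coloring_deleteEdges (c₁ := σ ∘ c₁) (Equiv.swap_apply_left _ _)
    (fun a b hab hE => σ.injective.ne (c₁.valid ?_)) (fun _ _ hab _ => c₂.valid hab) fun _ => ?_
  · refine deleteEdges_adj.2 ⟨(deleteEdges_adj.1 hab).1, fun he => hE ?_⟩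
    simpa using congrArg (Sym2.map f₁) (Set.mem_singleton_iff.1 he)
  · rw [Function.comp_apply, ← hc₂, ← Equiv.swap_apply_left (c₁ v₁) (c₂ v₂)]
    exact σ.injective.ne hc₁.symm

theorem exists_adj_apply_left (h : IsHajosJoinAlong G G₁ G₂ v₁ w₁ v₂ w₂ f₁ f₂) (hk : 2 ≤ k)
    (h₁ : G₁.IsColorCritical k) (x : V₁) : ∃ b, G.Adj (f₁ x) b := by
  by_cases hx : x = w₁
  · exact ⟨f₂ w₂, hx ▸ h.adj_w₁_w₂⟩
  obtain ⟨u, hu, hxu⟩ := h₁.exists_adj_ne hk x w₁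
  exact ⟨f₁ u, h.adj_apply_left (by simp [hxu, hx, hu])⟩

theorem isColorCritical (h : IsHajosJoinAlong G G₁ G₂ v₁ w₁ v₂ w₂ f₁ f₂) (hk : 2 ≤ k)
    (h₁ : G₁.IsColorCritical k) (h₂ : G₂.IsColorCritical k) : G.IsColorCritical k where
  not_colorable := h.not_colorable h₁.not_colorable h₂.not_colorable
  exists_adj a := by
    rcases h.range_union_range ▸ Set.mem_univ a with ⟨x, rfl⟩ | ⟨y, rfl⟩
    exacts [h.exists_adj_apply_left hk h₁ x, h.symm.exists_adj_apply_left hk h₂ y]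
  colorable_deleteEdges a b hab := by
    have e₁ := h₁.colorable_deleteEdges h.adj_left
    have e₂ := h₂.colorable_deleteEdges h.adj_right
    rcases h.adj_iff.1 hab with ⟨x, y, hxy, rfl, rfl⟩ | ⟨x, y, hxy, rfl, rfl⟩ | ⟨rfl, rfl⟩ |
      ⟨rfl, rfl⟩
    · exact h.colorable_deleteEdges_apply_left hxy
        (h₁.colorable_deleteEdges (deleteEdges_adj.1 hxy).1) h₂.not_colorable e₂
    · exact h.symm.colorable_deleteEdges_apply_left hxy
        (h₂.colorable_deleteEdges (deleteEdges_adj.1 hxy).1) h₁.not_colorable e₁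
    · exact h.colorable_deleteEdges_w₁_w₂ e₁ e₂
    · rw [Sym2.eq_swap]
      exact h.colorable_deleteEdges_w₁_w₂ e₁ e₂

theorem colorable_deleteEdges_left_of_w₁_w₂ (h : IsHajosJoinAlong G G₁ G₂ v₁ w₁ v₂ w₂ f₁ f₂)
    (hG : (G.deleteEdges {s(f₁ w₁, f₂ w₂)}).Colorable k) :
    (G₁.deleteEdges {s(v₁, w₁)}).Colorable k := by
  obtain ⟨c⟩ := hG
  exact ⟨Coloring.mk (c ∘ f₁) fun {x y} hxy =>
    c.valid (deleteEdges_adj.2 ⟨h.adj_apply_left hxy, h.mk_apply_left_ne_mk_w₁_w₂ x y⟩)⟩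

theorem not_colorable_left (h : IsHajosJoinAlong G G₁ G₂ v₁ w₁ v₂ w₂ f₁ f₂) (hk : 3 ≤ k)
    (hG : ¬ G.Colorable k) (h₂ : (G₂.deleteEdges {s(v₂, w₂)}).Colorable k) :
    ¬ G₁.Colorable k := by
  rintro ⟨d⟩
  obtain ⟨c₂⟩ := h₂
  obtain ⟨σ, hv, hw⟩ := Equiv.Perm.exists_apply_eq_and_apply_ne (by simpa using hk)
    (d.valid h.adj_left) (c₂ v₂) (c₂ w₂)
  refine hG ?_
  rw [← deleteEdges_empty (G := G)]
  exact h.nonempty_coloring_deleteEdges (c₁ := σ ∘ d) hv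
    (fun _ _ hxy _ => σ.injective.ne (d.valid (deleteEdges_adj.1 hxy).1))
    (fun _ _ hxy _ => c₂.valid hxy) fun _ => hw

theorem colorable_deleteEdges_left_of_apply (h : IsHajosJoinAlong G G₁ G₂ v₁ w₁ v₂ w₂ f₁ f₂)
    {x y : V₁} (hG : (G.deleteEdges {s(f₁ x, f₁ y)}).Colorable k) (h₂ : ¬ G₂.Colorable k) :
    (G₁.deleteEdges {s(x, y)}).Colorable k := by
  obtain ⟨c⟩ := hG
  by_cases hvw : c (f₁ v₁) = c (f₁ w₁)
  -- then `c` would colour `G₂`, the edge `w₁w₂` separating `v₂` from `w₂`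
  · refine absurd ⟨Coloring.ofDeleteEdge (v := v₂) (w := w₂)
      (Coloring.mk (c ∘ f₂) fun {a b} hab => c.valid ?_) ?_⟩ h₂
    · exact deleteEdges_adj.2 ⟨h.symm.adj_apply_left hab,
        h.mk_apply_right_ne_mk_apply_left (deleteEdges_adj.1 hab).1.ne x y⟩
    · show c (f₂ v₂) ≠ c (f₂ w₂)
      rw [← h.apply_left_eq_apply_right, hvw]
      exact c.valid (deleteEdges_adj.2 ⟨h.adj_w₁_w₂, (h.mk_apply_left_ne_mk_w₁_w₂ x y).symm⟩)
  · refine ⟨Coloring.ofDeleteEdge (v := v₁) (w := w₁)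
      (Coloring.mk (c ∘ f₁) fun {a b} hab => c.valid ?_) hvw⟩
    simp only [deleteEdges_adj, Set.mem_singleton_iff] at hab ⊢
    refine ⟨h.adj_apply_left (deleteEdges_adj.2 ⟨hab.1.1, hab.2⟩), fun he => hab.1.2 ?_⟩
    exact Sym2.map.injective f₁.injective (by simpa using he)

theorem exists_adj_left (h : IsHajosJoinAlong G G₁ G₂ v₁ w₁ v₂ w₂ f₁ f₂)
    (hG : ∀ a, ∃ b, G.Adj a b) (x : V₁) : ∃ y, G₁.Adj x y := by
  by_cases hx : x = v₁ ∨ x = w₁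
  · rcases hx with rfl | rfl
    exacts [⟨_, h.adj_left⟩, ⟨_, h.adj_left.symm⟩]
  push Not at hx
  obtain ⟨b, hb⟩ := hG (f₁ x)
  rcases h.adj_iff.1 hb with ⟨x', y, hxy, hx', -⟩ | ⟨y, -, -, hy, -⟩ | ⟨hx', -⟩ | ⟨hx', -⟩
  · exact ⟨y, f₁.injective hx' ▸ (deleteEdges_adj.1 hxy).1⟩
  · exact absurd ((h.apply_eq_apply_iff x y).1 hy.symm).1 hx.1
  · exact absurd (f₁.injective hx') hx.2
  · exact absurd ((h.apply_eq_apply_iff x w₂).1 hx').1 hx.1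

theorem isColorCritical_left (h : IsHajosJoinAlong G G₁ G₂ v₁ w₁ v₂ w₂ f₁ f₂) (hk : 3 ≤ k)
    (hG : G.IsColorCritical k) : G₁.IsColorCritical k := by
  have e₁ := h.colorable_deleteEdges_left_of_w₁_w₂ (hG.colorable_deleteEdges h.adj_w₁_w₂)
  have e₂ := h.symm.colorable_deleteEdges_left_of_w₁_w₂
    (hG.colorable_deleteEdges h.adj_w₁_w₂.symm)
  refine ⟨h.not_colorable_left hk hG.not_colorable e₂, h.exists_adj_left hG.exists_adj,
    fun x y hxy => ?_⟩
  by_cases he : s(x, y) = s(v₁, w₁)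
  · rwa [he]
  exact h.colorable_deleteEdges_left_of_apply
    (hG.colorable_deleteEdges (h.adj_apply_left (deleteEdges_adj.2 ⟨hxy, he⟩)))
    (h.symm.not_colorable_left hk hG.not_colorable e₁)

theorem of_iso {V : Type*} {G' : SimpleGraph V} (h : IsHajosJoinAlong G G₁ G₂ v₁ w₁ v₂ w₂ f₁ f₂)
    (e : G' ≃g G) :
    IsHajosJoinAlong G' G₁ G₂ v₁ w₁ v₂ w₂ (f₁.trans e.toEquiv.symm.toEmbedding)
      (f₂.trans e.toEquiv.symm.toEmbedding) where
  adj_left := h.adj_left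
  adj_right := h.adj_right
  apply_eq_apply_iff x y := by simpa using h.apply_eq_apply_iff x y
  range_union_range := by
    simp only [Function.Embedding.coe_trans, Set.range_comp, ← Set.image_union,
      h.range_union_range]
    simp
  eq_sup := by
    ext a b
    have hw := h.apply_left_ne_apply_right w₁ h.adj_right.ne'
    rw [← e.map_adj_iff, h.adj_iff]
    simp [edge_adj_of_ne (e.toEquiv.symm.injective.ne hw), Equiv.symm_apply_eq,
      Equiv.eq_symm_apply, or_assoc]

end IsHajosJoinAlong

section HajosJoin

variable {V₁ V₂ : Type} {G₁ : SimpleGraph V₁} {G₂ : SimpleGraph V₂} {v₁ w₁ : V₁} {v₂ w₂ : V₂}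

def hajosInl (v₂ : V₂) : V₁ ↪ {x : V₁ ⊕ V₂ // x ≠ Sum.inr v₂} :=
  ⟨fun x => ⟨Sum.inl x, Sum.inl_ne_inr⟩, fun _ _ h => Sum.inl_injective (congrArg Subtype.val h)⟩

open Classical in
noncomputable def hajosInr (v₁ : V₁) (v₂ : V₂) : V₂ ↪ {x : V₁ ⊕ V₂ // x ≠ Sum.inr v₂} :=
  ⟨fun y => ⟨if y = v₂ then Sum.inl v₁ else Sum.inr y, by split_ifs <;> simp_all⟩,
    fun y y' h => by
      simp only [Subtype.mk.injEq] at h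
      split_ifs at h <;> simp_all⟩

@[simp] theorem coe_hajosInl (x : V₁) : (hajosInl v₂ x : V₁ ⊕ V₂) = Sum.inl x := rfl

open Classical in
@[simp] theorem coe_hajosInr (y : V₂) :
    (hajosInr v₁ v₂ y : V₁ ⊕ V₂) = if y = v₂ then Sum.inl v₁ else Sum.inr y := rfl

theorem isHajosJoinAlong_hajosJoin (h₁ : G₁.Adj v₁ w₁) (h₂ : G₂.Adj v₂ w₂) :
    (hajosJoin G₁ G₂ v₁ w₁ v₂ w₂).IsHajosJoinAlong G₁ G₂ v₁ w₁ v₂ w₂ (hajosInl v₂)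
      (hajosInr v₁ v₂) where
  adj_left := h₁
  adj_right := h₂
  apply_eq_apply_iff x y := by
    rw [Subtype.ext_iff, coe_hajosInl, coe_hajosInr]
    split_ifs with hy <;> simp [hy]
  range_union_range := by
    refine Set.eq_univ_of_forall fun ⟨a, ha⟩ => ?_
    rcases a with x | y
    · exact Or.inl ⟨x, rfl⟩
    · exact Or.inr ⟨y, Subtype.ext (by simpa using ha)⟩
  eq_sup := by
    ext ⟨a | a, ha⟩ ⟨b | b, hb⟩ <;>
      simp [hajosJoin, edge_adj, Subtype.ext_iff, ite_eq_iff, h₂.ne'] at ha hb ⊢ <;>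
      grind [G₁.adj_comm, G₂.adj_comm, Adj.ne]

end HajosJoin

end SimpleGraph

open SimpleGraph

theorem IsHajosJoin.exists_isHajosJoinAlong {V V₁ V₂ : Type} {G : SimpleGraph V}
    {G₁ : SimpleGraph V₁} {G₂ : SimpleGraph V₂} (h : IsHajosJoin G G₁ G₂) :
    ∃ v₁ w₁ v₂ w₂ f₁ f₂, G.IsHajosJoinAlong G₁ G₂ v₁ w₁ v₂ w₂ f₁ f₂ := by
  obtain ⟨v₁, w₁, v₂, w₂, h₁, h₂, ⟨e⟩⟩ := h
  exact ⟨_, _, _, _, _, _, (isHajosJoinAlong_hajosJoin h₁ h₂).of_iso e⟩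

theorem hajos_join_critical_iff_general {V V₁ V₂ : Type}
    (G : SimpleGraph V) (G₁ : SimpleGraph V₁) (G₂ : SimpleGraph V₂) (k : ℕ) (hk : 3 ≤ k)
    (h : IsHajosJoin G G₁ G₂) :
    (IsCritical G ∧ G.chromaticNumber = (↑(k + 1) : ℕ∞)) ↔
      ((IsCritical G₁ ∧ G₁.chromaticNumber = (↑(k + 1) : ℕ∞)) ∧
       (IsCritical G₂ ∧ G₂.chromaticNumber = (↑(k + 1) : ℕ∞))) := by
  obtain ⟨v₁, w₁, v₂, w₂, f₁, f₂, hG⟩ := h.exists_isHajosJoinAlong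
  simp only [isCritical_and_chromaticNumber_eq_iff (by omega : 1 ≤ k)]
  exact ⟨fun hJ => ⟨hG.isColorCritical_left hk hJ, hG.symm.isColorCritical_left hk hJ⟩,
    fun ⟨h₁, h₂⟩ => hG.isColorCritical (by omega) h₁ h₂⟩

/-- (Hajós 1961) A Hajós join is critical with chromatic
number `k+1` (`k ≥ 3`) iff both constituents are. -/
theorem hajos_join_critical_iff {V V₁ V₂ : Type} [Fintype V] [Fintype V₁] [Fintype V₂]
    (G : SimpleGraph V) (G₁ : SimpleGraph V₁) (G₂ : SimpleGraph V₂) (k : ℕ) (hk : 3 ≤ k)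
    (h : IsHajosJoin G G₁ G₂) :
    (IsCritical G ∧ G.chromaticNumber = (↑(k + 1) : ℕ∞)) ↔
      ((IsCritical G₁ ∧ G₁.chromaticNumber = (↑(k + 1) : ℕ∞)) ∧
       (IsCritical G₂ ∧ G₂.chromaticNumber = (↑(k + 1) : ℕ∞))) :=
  hajos_join_critical_iff_general G G₁ G₂ k hk h
end

section
/- Let G be a critical graph with chromatic number k+1 for an integer k ≥ 3. If G has a separating set consisting of one edge and one vertex, then G is the Hajós join of two graphs. -/
open SimpleGraph

/-!
Let `{v, w₁w₂}` separate `G` and look at the components of `G - v - w₁w₂`. If one of them contains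
neither `w₁` nor `w₂`, then `v` is a cut vertex; this is impossible in a critical graph, because
`k`-colourings of the two sides, permuted to agree at `v`, would combine to a `k`-colouring of `G`.
Otherwise the component `A` of `w₁` and the rest `B ∋ w₂` are joined only by `w₁w₂`. A
`k`-colouring of `G - w₁w₂` gives `w₁` and `w₂` the same colour; if `v` were adjacent to `w₁` or
`w₂`, swapping on `B` the colour of `w₂` with a third colour (here `k ≥ 3` is used) would keep
`v`'s colour and `k`-colour `G`. So `v` is adjacent to neither, and `G` is the Hajós join of
`G[A + v] + vw₁` and `G[B + v] + vw₂` at the edges `vw₁`, `vw₂`.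
-/

namespace SimpleGraph

open Set Function

variable {V α : Type*} {G : SimpleGraph V}

def IsProperColoringOn (G : SimpleGraph V) (S : Set V) (φ : V → α) : Prop :=
  ∀ ⦃a b⦄, a ∈ S → b ∈ S → G.Adj a b → φ a ≠ φ b

lemma IsProperColoringOn.comp {β : Type*} {S : Set V} {φ : V → α} (hφ : G.IsProperColoringOn S φ)
    {f : α → β} (hf : Injective f) : G.IsProperColoringOn S (f ∘ φ) :=
  fun _ _ ha hb hab => hf.ne (hφ ha hb hab)

lemma Colorable.exists_isProperColoringOn {S : Set V} {n : ℕ} (h : (G.induce S).Colorable n)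
    (hn : 0 < n) : ∃ φ : V → Fin n, G.IsProperColoringOn S φ := by
  classical
  obtain ⟨C⟩ := h
  refine ⟨fun x => if hx : x ∈ S then C ⟨x, hx⟩ else ⟨0, hn⟩, fun a b ha hb hab => ?_⟩
  simpa [ha, hb] using C.valid (show (G.induce S).Adj ⟨a, ha⟩ ⟨b, hb⟩ from hab)

lemma Coloring.isProperColoringOn_of_deleteEdges {e : Sym2 V} (C : (G.deleteEdges {e}).Coloring α)
    {S : Set V} {y : V} (hy : y ∈ e) (hyS : y ∉ S) : G.IsProperColoringOn S C := by
  refine fun a b ha hb hab => C.valid (deleteEdges_adj.mpr ⟨hab, fun hab_e => ?_⟩)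
  rw [mem_singleton_iff] at hab_e
  rcases Sym2.mem_iff.mp (hab_e ▸ hy) with rfl | rfl <;> contradiction

lemma Coloring.apply_eq_of_deleteEdges {x y : V} (hG : ¬ Nonempty (G.Coloring α))
    (C : (G.deleteEdges {s(x, y)}).Coloring α) : C x = C y := by
  by_contra hne
  refine hG ⟨Coloring.mk C fun {a b} hab => ?_⟩
  by_cases he : s(a, b) = s(x, y)
  · rcases Sym2.eq_iff.mp he with ⟨rfl, rfl⟩ | ⟨rfl, rfl⟩
    exacts [hne, Ne.symm hne]
  · exact C.valid (deleteEdges_adj.mpr ⟨hab, he⟩)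

lemma nonempty_coloring_of_glue {v : V} {A B : Set V} (hAB : A ∪ B = {v}ᶜ) {φ₁ φ₂ : V → α}
    (h₁ : G.IsProperColoringOn (insert v A) φ₁) (h₂ : G.IsProperColoringOn (insert v B) φ₂)
    (hv : φ₁ v = φ₂ v) (hcross : ∀ a ∈ A, ∀ b ∈ B, G.Adj a b → φ₁ a ≠ φ₂ b) :
    Nonempty (G.Coloring α) := by
  classical
  have hcover : ∀ x, x ∉ B → x ∈ insert v A := fun x hx => by
    by_contra h
    have : x ∈ A ∪ B := hAB ▸ fun hxv => h (Or.inl hxv)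
    exact this.elim (fun hA => h (Or.inr hA)) hx
  refine ⟨Coloring.mk (B.piecewise φ₂ φ₁) fun {a b} hab => ?_⟩
  by_cases ha : a ∈ B <;> by_cases hb : b ∈ B <;> simp only [piecewise, ha, hb, if_true, if_false]
  · exact h₂ (mem_insert_of_mem v ha) (mem_insert_of_mem v hb) hab
  · rcases hcover b hb with rfl | hbA
    · exact hv ▸ h₂ (mem_insert_of_mem _ ha) (mem_insert _ B) hab
    · exact (hcross b hbA a ha hab.symm).symm
  · rcases hcover a ha with rfl | haA
    · exact hv ▸ h₂ (mem_insert _ B) (mem_insert_of_mem _ hb) hab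
    · exact hcross a haA b hb hab
  · exact h₁ (hcover a ha) (hcover b hb) hab

lemma not_colorable_of_chromaticNumber_eq {k : ℕ} (h : G.chromaticNumber = (k + 1 : ℕ)) :
    ¬ G.Colorable k := fun hc => by
  have := hc.chromaticNumber_le
  rw [h, Nat.cast_le] at this
  omega

lemma sup_edge_deleteEdges {W : Type} {H : SimpleGraph W} {s t : W} (h : ¬ H.Adj s t) :
    (H ⊔ edge s t).deleteEdges {s(s, t)} = H := by
  simp [deleteEdges_sup, h]

end SimpleGraph

/-- Deleting `v` and the edge `w₁w₂` separates `A ∋ w₁` from `B ∋ w₂`. -/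
structure IsHajosSplit {V : Type} (G : SimpleGraph V) (v w₁ w₂ : V) (A B : Set V) : Prop where
  union_eq : A ∪ B = {v}ᶜ
  disjoint : Disjoint A B
  left_mem : w₁ ∈ A
  right_mem : w₂ ∈ B
  adj : G.Adj w₁ w₂
  eq_of_adj : ∀ a ∈ A, ∀ b ∈ B, G.Adj a b → a = w₁ ∧ b = w₂

namespace IsHajosSplit

variable {V : Type} {G : SimpleGraph V} {v w₁ w₂ : V} {A B : Set V}

lemma ne_of_mem_left (h : IsHajosSplit G v w₁ w₂ A B) {a : V} (ha : a ∈ A) : a ≠ v :=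
  (h.union_eq ▸ Set.mem_union_left B ha : a ∈ ({v}ᶜ : Set V))

lemma ne_of_mem_right (h : IsHajosSplit G v w₁ w₂ A B) {b : V} (hb : b ∈ B) : b ≠ v :=
  (h.union_eq ▸ Set.mem_union_right A hb : b ∈ ({v}ᶜ : Set V))

lemma right_notMem_insert_left (h : IsHajosSplit G v w₁ w₂ A B) : w₂ ∉ insert v A :=
  fun hw => hw.elim (h.ne_of_mem_right h.right_mem) (h.disjoint.notMem_of_mem_right h.right_mem)

lemma left_notMem_insert_right (h : IsHajosSplit G v w₁ w₂ A B) : w₁ ∉ insert v B :=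
  fun hw => hw.elim (h.ne_of_mem_left h.left_mem) (h.disjoint.notMem_of_mem_left h.left_mem)

end IsHajosSplit

namespace IsCritical

open Set

variable {V : Type} {G : SimpleGraph V} {k : ℕ}

lemma colorable_of_ne_top_s12 (hG : IsCritical G) (hχ : G.chromaticNumber = (k + 1 : ℕ))
    {H : G.Subgraph} (hH : H ≠ ⊤) : H.coe.Colorable k := by
  have h := hG H hH
  rw [hχ, Nat.cast_succ, ENat.lt_add_one_iff (ENat.natCast_ne_top k)] at h
  exact chromaticNumber_le_iff_colorable.mp h

lemma colorable_induce_s12 (hG : IsCritical G) (hχ : G.chromaticNumber = (k + 1 : ℕ))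
    {S : Set V} (hS : S ≠ univ) : (G.induce S).Colorable k := by
  rw [induce_eq_coe_induce_top]
  exact hG.colorable_of_ne_top_s12 hχ fun h => hS (congrArg Subgraph.verts h)

lemma colorable_deleteEdges (hG : IsCritical G) (hχ : G.chromaticNumber = (k + 1 : ℕ))
    {x y : V} (hxy : G.Adj x y) : (G.deleteEdges {s(x, y)}).Colorable k := by
  set H := (⊤ : G.Subgraph).deleteEdges {s(x, y)}
  have hH : H ≠ ⊤ := fun h => by
    have : H.Adj x y := h ▸ hxy
    simp [H] at this
  exact (hG.colorable_of_ne_top_s12 hχ hH).of_hom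
    ⟨fun u => ⟨u, trivial⟩, fun hab => show H.Adj _ _ by simpa [H] using hab⟩

lemma exists_adj_of_union_eq_compl_singleton (hG : IsCritical G)
    (hχ : G.chromaticNumber = (k + 1 : ℕ)) (hk : 0 < k) {v : V} {A B : Set V}
    (hAB : A ∪ B = {v}ᶜ) (hdisj : Disjoint A B) (hA : A.Nonempty) (hB : B.Nonempty) :
    ∃ a ∈ A, ∃ b ∈ B, G.Adj a b := by
  by_contra! hcross
  have insert_ne_univ : ∀ {A B : Set V}, A ∪ B = {v}ᶜ → Disjoint A B → B.Nonempty →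
      insert v A ≠ univ := fun hAB hdisj ⟨b, hb⟩ h => by
    have hbv : b ≠ v := (hAB ▸ mem_union_right _ hb : b ∈ ({v}ᶜ : Set V))
    exact (h ▸ mem_univ b).elim hbv fun hbA => hdisj.ne_of_mem hbA hb rfl
  obtain ⟨φ₁, h₁⟩ :=
    (hG.colorable_induce_s12 hχ (insert_ne_univ hAB hdisj hB)).exists_isProperColoringOn hk
  obtain ⟨φ₂, h₂⟩ := (hG.colorable_induce_s12 hχ
    (insert_ne_univ (union_comm A B ▸ hAB) hdisj.symm hA)).exists_isProperColoringOn hk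
  let σ := Equiv.swap (φ₂ v) (φ₁ v)
  exact not_colorable_of_chromaticNumber_eq hχ <| nonempty_coloring_of_glue hAB h₁
    (h₂.comp σ.injective) (by simp [σ]) fun a ha b hb hab => (hcross a ha b hb hab).elim

lemma not_adj_of_isHajosSplit (hG : IsCritical G) (hχ : G.chromaticNumber = (k + 1 : ℕ))
    (hk : 3 ≤ k) {v w₁ w₂ : V} {A B : Set V} (h : IsHajosSplit G v w₁ w₂ A B) :
    ¬ G.Adj v w₁ ∧ ¬ G.Adj v w₂ := by
  have hG_not := not_colorable_of_chromaticNumber_eq hχ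
  obtain ⟨C⟩ := hG.colorable_deleteEdges hχ h.adj
  have hC : C w₁ = C w₂ := C.apply_eq_of_deleteEdges hG_not
  rw [← not_or]
  intro hv
  have hvC : C v ≠ C w₂ := by
    have hw₁ := h.ne_of_mem_left h.left_mem
    have hw₂ := h.ne_of_mem_right h.right_mem
    refine hv.elim (fun hv => hC ▸ C.valid ?_) (fun hv => C.valid ?_) <;>
      refine deleteEdges_adj.mpr ⟨hv, ?_⟩ <;> simp [hw₁.symm, hw₂.symm]
  obtain ⟨c, hcv, hcw⟩ := Fin.exists_ne_and_ne_of_two_lt (C v) (C w₂) (by omega)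
  let σ := Equiv.swap (C w₂) c
  have hσv : σ (C v) = C v := Equiv.swap_apply_of_ne_of_ne hvC (Ne.symm hcv)
  refine hG_not (nonempty_coloring_of_glue h.union_eq (φ₂ := σ ∘ C)
    (C.isProperColoringOn_of_deleteEdges (Sym2.mem_mk_right _ _) h.right_notMem_insert_left)
    ((C.isProperColoringOn_of_deleteEdges (Sym2.mem_mk_left _ _) h.left_notMem_insert_right).comp
      σ.injective) hσv.symm ?_)
  intro a ha b hb hab
  obtain ⟨rfl, rfl⟩ := h.eq_of_adj a ha b hb hab
  simpa [σ, hC] using Ne.symm hcw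

end IsCritical

section Separation

open Set

variable {V : Type} {G : SimpleGraph V}

lemma exists_separation_or_isHajosSplit {v w₁ w₂ : V} (hadj : G.Adj w₁ w₂)
    (hH : Nontrivial ((G.deleteEdges {s(w₁, w₂)}).induce {v}ᶜ).ConnectedComponent) :
    (∃ A B : Set V, A ∪ B = {v}ᶜ ∧ Disjoint A B ∧ A.Nonempty ∧ B.Nonempty ∧
        ∀ a ∈ A, ∀ b ∈ B, ¬ G.Adj a b) ∨
      ∃ A B : Set V, IsHajosSplit G v w₁ w₂ A B := by
  set H := (G.deleteEdges {s(w₁, w₂)}).induce ({v}ᶜ : Set V)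
  let A (c : H.ConnectedComponent) : Set V := Subtype.val '' c.supp
  have subset c : A c ⊆ {v}ᶜ := image_subset_iff.mpr fun x _ => x.2
  have eq_of_mem {c c' x} (hc : x ∈ A c) (hc' : x ∈ A c') : c = c' := by
    obtain ⟨y, hy, rfl⟩ := hc
    obtain ⟨y', hy', hyy'⟩ := hc'
    rw [Subtype.ext hyy'] at hy'
    exact hy.symm.trans hy'
  have cross c : ∀ a ∈ A c, ∀ b ∈ {v}ᶜ \ A c, G.Adj a b → s(a, b) = s(w₁, w₂) := by
    rintro _ ⟨a, ha, rfl⟩ b ⟨hbv, hbc⟩ hab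
    by_contra hne
    have hH_adj : H.Adj a ⟨b, hbv⟩ := deleteEdges_adj.mpr ⟨hab, hne⟩
    exact hbc ⟨⟨b, hbv⟩, c.mem_supp_of_adj_mem_supp ha hH_adj, rfl⟩
  have split c : A c ∪ ({v}ᶜ \ A c) = {v}ᶜ ∧ Disjoint (A c) ({v}ᶜ \ A c) :=
    ⟨union_sdiff_cancel (subset c), disjoint_sdiff_right⟩
  by_cases hsep : ∃ c, w₁ ∉ A c ∧ w₂ ∉ A c
  · obtain ⟨c, h₁, h₂⟩ := hsep
    obtain ⟨c', hc'⟩ := exists_ne c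
    obtain ⟨x, hx⟩ := c'.nonempty_supp.image Subtype.val
    refine Or.inl ⟨A c, {v}ᶜ \ A c, (split c).1, (split c).2, c.nonempty_supp.image _,
      ⟨x, subset c' hx, fun hxc => hc' (eq_of_mem hx hxc)⟩, fun a ha b hb hab => ?_⟩
    rcases Sym2.eq_iff.mp (cross c a ha b hb hab) with ⟨rfl, -⟩ | ⟨rfl, -⟩
    exacts [h₁ ha, h₂ ha]
  · push Not at hsep
    obtain ⟨c, hw₁, c', hc'⟩ : ∃ c, w₁ ∈ A c ∧ ∃ c', c' ≠ c := by
      obtain ⟨c₁, c₂, hc⟩ := exists_pair_ne H.ConnectedComponent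
      by_cases h₁ : w₁ ∈ A c₁
      · exact ⟨c₁, h₁, c₂, hc.symm⟩
      by_cases h₂ : w₁ ∈ A c₂
      · exact ⟨c₂, h₂, c₁, hc⟩
      exact (hc (eq_of_mem (hsep c₁ h₁) (hsep c₂ h₂))).elim
    have hw₂ : w₂ ∈ A c' := hsep c' fun h => hc' (eq_of_mem h hw₁)
    refine Or.inr ⟨A c, {v}ᶜ \ A c, (split c).1, (split c).2, hw₁,
      ⟨subset c' hw₂, fun h => hc' (eq_of_mem hw₂ h)⟩, hadj, fun a ha b hb hab => ?_⟩
    rcases Sym2.eq_iff.mp (cross c a ha b hb hab) with h | ⟨-, rfl⟩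
    exacts [h, (hb.2 hw₁).elim]

end Separation

section HajosJoin

variable {V₁ V₂ : Type} {G₁ : SimpleGraph V₁} {G₂ : SimpleGraph V₂} {v₁ w₁ : V₁} {v₂ w₂ : V₂}

lemma hajosJoin_adj_inl_inl {x y : V₁} (hx : Sum.inl x ≠ Sum.inr v₂)
    (hy : Sum.inl y ≠ Sum.inr v₂) :
    (hajosJoin G₁ G₂ v₁ w₁ v₂ w₂).Adj ⟨.inl x, hx⟩ ⟨.inl y, hy⟩ ↔
      (G₁.deleteEdges {s(v₁, w₁)}).Adj x y := by
  simp only [hajosJoin, fromRel_adj, deleteEdges_adj]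
  grind [adj_comm, Adj.ne]

lemma hajosJoin_adj_inr_inr {x y : V₂} (hx : Sum.inr x ≠ Sum.inr v₂)
    (hy : Sum.inr y ≠ Sum.inr v₂) :
    (hajosJoin G₁ G₂ v₁ w₁ v₂ w₂).Adj ⟨.inr x, hx⟩ ⟨.inr y, hy⟩ ↔
      (G₂.deleteEdges {s(v₂, w₂)}).Adj x y := by
  simp only [hajosJoin, fromRel_adj, deleteEdges_adj]
  grind [adj_comm, Adj.ne]

lemma hajosJoin_adj_inl_inr {x : V₁} {y : V₂} (hx : Sum.inl x ≠ Sum.inr v₂)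
    (hy : Sum.inr y ≠ Sum.inr v₂) :
    (hajosJoin G₁ G₂ v₁ w₁ v₂ w₂).Adj ⟨.inl x, hx⟩ ⟨.inr y, hy⟩ ↔
      x = v₁ ∧ (G₂.deleteEdges {s(v₂, w₂)}).Adj v₂ y ∨ x = w₁ ∧ y = w₂ := by
  simp only [hajosJoin, fromRel_adj, deleteEdges_adj]
  grind [adj_comm, Adj.ne]

end HajosJoin

section Construction

open Set Function

variable {V : Type} {G : SimpleGraph V}

lemma bijective_sumElim_val {v : V} {A B : Set V} (hAB : A ∪ B = {v}ᶜ) (hdisj : Disjoint A B) :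
    Bijective fun x : {x : ↥(insert v A) ⊕ ↥(insert v B) // x ≠ .inr ⟨v, mem_insert v B⟩} =>
      Sum.elim Subtype.val Subtype.val x.1 := by
  have hA : ∀ {x}, x ∈ insert v B → x ≠ v → x ∉ insert v A := fun hxB hxv hxA =>
    hdisj.notMem_of_mem_left (hxA.resolve_left hxv) (hxB.resolve_left hxv)
  have hB : ∀ {x}, x ∉ insert v A → x ∈ B := fun {x} hx =>
    ((hAB.symm ▸ fun h => hx (.inl h) : x ∈ A ∪ B)).resolve_left fun h => hx (.inr h)
  refine ⟨?_, fun x => ?_⟩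
  · rintro ⟨a | b, ha⟩ ⟨a' | b', ha'⟩ h <;> simp only [Sum.elim_inl, Sum.elim_inr] at h
    · exact Subtype.ext (congrArg Sum.inl (Subtype.ext h))
    · exact (hA b'.2 (fun hv => ha' (congrArg Sum.inr (Subtype.ext hv))) (h ▸ a.2)).elim
    · exact (hA b.2 (fun hv => ha (congrArg Sum.inr (Subtype.ext hv))) (h ▸ a'.2)).elim
    · exact Subtype.ext (congrArg Sum.inr (Subtype.ext h))
  · by_cases hx : x ∈ insert v A
    · exact ⟨⟨.inl ⟨x, hx⟩, Sum.inl_ne_inr⟩, rfl⟩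
    · exact ⟨⟨.inr ⟨x, mem_insert_of_mem v (hB hx)⟩,
        fun h => hx (.inl (congrArg Subtype.val (Sum.inr_injective h)))⟩, rfl⟩

theorem IsHajosSplit.isHajosJoin {v w₁ w₂ : V} {A B : Set V} (h : IsHajosSplit G v w₁ w₂ A B)
    (h₁ : ¬ G.Adj v w₁) (h₂ : ¬ G.Adj v w₂) :
    IsHajosJoin G
      (G.induce (insert v A) ⊔ edge ⟨v, mem_insert v A⟩ ⟨w₁, mem_insert_of_mem v h.left_mem⟩)
      (G.induce (insert v B) ⊔ edge ⟨v, mem_insert v B⟩ ⟨w₂, mem_insert_of_mem v h.right_mem⟩) := by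
  set v₁ : ↥(insert v A) := ⟨v, mem_insert v A⟩
  set x₁ : ↥(insert v A) := ⟨w₁, mem_insert_of_mem v h.left_mem⟩
  set v₂ : ↥(insert v B) := ⟨v, mem_insert v B⟩
  set x₂ : ↥(insert v B) := ⟨w₂, mem_insert_of_mem v h.right_mem⟩
  set G₁ := G.induce (insert v A) ⊔ edge v₁ x₁
  set G₂ := G.induce (insert v B) ⊔ edge v₂ x₂
  have hG₁ : G₁.deleteEdges {s(v₁, x₁)} = G.induce (insert v A) := sup_edge_deleteEdges h₁
  have hG₂ : G₂.deleteEdges {s(v₂, x₂)} = G.induce (insert v B) := sup_edge_deleteEdges h₂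
  have cross a b ha hb :
      (hajosJoin G₁ G₂ v₁ x₁ v₂ x₂).Adj ⟨.inl a, ha⟩ ⟨.inr b, hb⟩ ↔ G.Adj a b := by
    obtain ⟨b, hbB⟩ := b
    have hbv : b ≠ v := fun e => hb (by subst e; rfl)
    rw [hajosJoin_adj_inl_inr, hG₂]
    obtain ⟨a, rfl | haA⟩ := a
    · simp [v₁, x₁, v₂, Subtype.ext_iff, (h.ne_of_mem_left h.left_mem).symm]
    · simp only [v₁, x₁, x₂, Subtype.ext_iff, h.ne_of_mem_left haA, false_and, false_or]
      exact ⟨fun ⟨ha, hb⟩ => ha ▸ hb ▸ h.adj, h.eq_of_adj a haA b (hbB.resolve_left hbv)⟩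
  refine ⟨v₁, x₁, v₂, x₂, ?_, ?_,
    ⟨.symm ⟨Equiv.ofBijective _ (bijective_sumElim_val h.union_eq h.disjoint), ?_⟩⟩⟩
  · simp [G₁, v₁, x₁, edge_adj, Subtype.ext_iff, (h.ne_of_mem_left h.left_mem).symm]
  · simp [G₂, v₂, x₂, edge_adj, Subtype.ext_iff, (h.ne_of_mem_right h.right_mem).symm]
  rintro ⟨a | b, ha⟩ ⟨a' | b', ha'⟩
  · rw [hajosJoin_adj_inl_inl, hG₁]; rfl
  · exact (cross a b' ha ha').symm
  · exact (G.adj_comm _ _).trans ((cross a' b ha' ha).symm.trans (adj_comm _ _ _))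
  · rw [hajosJoin_adj_inr_inr, hG₂]; rfl

end Construction

/-- A critical graph with chromatic number `k+1` (`k ≥ 3`)
having a separating set consisting of one edge and one vertex is a Hajós join
of two graphs. -/
theorem vertex_edge_separator_hajos {V : Type} [Fintype V]
    (G : SimpleGraph V) (k : ℕ) (hk : 3 ≤ k)
    (hcrit : IsCritical G) (hchi : G.chromaticNumber = (↑(k + 1) : ℕ∞))
    (hsep : ∃ (v : V) (e : Sym2 V), e ∈ G.edgeSet ∧
      numComponents G < numComponents ((G.deleteEdges {e}).induce {v}ᶜ)) :
    ∃ (V₁ V₂ : Type) (_ : Fintype V₁) (_ : Fintype V₂)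
      (G₁ : SimpleGraph V₁) (G₂ : SimpleGraph V₂), IsHajosJoin G G₁ G₂ := by
  obtain ⟨v, e, he, hlt⟩ := hsep
  induction e using Sym2.ind with | _ w₁ w₂ => ?_
  have : Nonempty V := ⟨w₁⟩
  have hG : 1 ≤ numComponents G := Nat.card_pos
  have hnontriv : Nontrivial ((G.deleteEdges {s(w₁, w₂)}).induce {v}ᶜ).ConnectedComponent :=
    Finite.one_lt_card_iff_nontrivial.mp (hG.trans_lt hlt)
  rcases exists_separation_or_isHajosSplit he hnontriv with
    ⟨A, B, hAB, hdisj, hA, hB, hcross⟩ | ⟨A, B, h⟩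
  · obtain ⟨a, ha, b, hb, hab⟩ :=
      hcrit.exists_adj_of_union_eq_compl_singleton hchi (by omega) hAB hdisj hA hB
    exact (hcross a ha b hb hab).elim
  · obtain ⟨h₁, h₂⟩ := hcrit.not_adj_of_isHajosSplit hchi hk h
    exact ⟨_, _, Fintype.ofFinite _, Fintype.ofFinite _, _, _, h.isHajosJoin h₁ h₂⟩
end
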